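/- arXiv:1407.7152 — 8 statements merged into one kernel-verified Lean document; each statement's English description precedes it below -/
import Mathlib

section
/- Let Θ, 𝒳, 𝒵 be measurable spaces equipped with σ-finite measures ν_Θ, ν_X, ν_Z, let p_Θ : Θ → ℝ≥0 be a probability density with respect to ν_Θ, and let p_X(·|θ), p_Z(·|θ) be conditional probability densities with respect to ν_X and ν_Z respectively, so that the joint density of (θ, X, Z) factorizes as p_Θ(θ)·p_X(x|θ)·p_Z(z|θ) (i.e., X and Z are conditionally independent given θ). Let D be a positive integer and let F : {1,…,D} × 𝒵 × Θ → ℝ be a cost function such that all integrals below are finite. For a measurable quantizer δ : 𝒳 → {1,…,D} define the Bayes risk J(δ) = ∫∫∫ F(δ(x), z, θ) p_Θ(θ) p_X(x|θ) p_Z(z|θ) dν_Z(z) dν_X(x) dν_Θ(θ), and define a(θ,d) = ∫ F(d, z, θ) p_Z(z|θ) dν_Z(z). Then a measurable δ* minimizes J over all measurable quantizers δ : 𝒳 → {1,…,D} if and only if, for almost every x with respect to the marginal distribution of X, δ*(x) minimizes d ↦ ∫ a(θ, d) p_Θ(θ) p_X(x|θ) dν_Θ(θ) over d ∈ {1,…,D}.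 -/
open MeasureTheory

/-- A measurable quantizer `δ*` minimizes the Bayes risk
`J(δ) = ∫∫∫ F(δ(x), z, θ) pΘ(θ) pX(x|θ) pZ(z|θ)` (with `X` and `Z` conditionally
independent given `θ`) if and only if, for almost every `x` with respect to the
marginal distribution of `X`, `δ*(x)` minimizes
`d ↦ ∫ a(θ, d) pΘ(θ) pX(x|θ) dνΘ(θ)` where `a(θ,d) = ∫ F(d,z,θ) pZ(z|θ) dνZ(z)`. -/
theorem optimal_quantizer_conditionally_independent
    {Θ 𝒳 𝒵 : Type*} [MeasurableSpace Θ] [MeasurableSpace 𝒳] [MeasurableSpace 𝒵]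
    (νΘ : Measure Θ) (νX : Measure 𝒳) (νZ : Measure 𝒵)
    [SigmaFinite νΘ] [SigmaFinite νX] [SigmaFinite νZ]
    -- prior probability density of θ
    (pΘ : Θ → ℝ) (hpΘ_nn : ∀ θ, 0 ≤ pΘ θ) (hpΘ_meas : Measurable pΘ)
    (hpΘ_prob : ∫ θ, pΘ θ ∂νΘ = 1)
    -- conditional probability density of X given θ
    (pX : Θ → 𝒳 → ℝ) (hpX_nn : ∀ θ x, 0 ≤ pX θ x)
    (hpX_meas : Measurable fun q : Θ × 𝒳 => pX q.1 q.2)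
    (hpX_prob : ∀ θ, ∫ x, pX θ x ∂νX = 1)
    -- conditional probability density of Z given θ
    (pZ : Θ → 𝒵 → ℝ) (hpZ_nn : ∀ θ z, 0 ≤ pZ θ z)
    (hpZ_meas : Measurable fun q : Θ × 𝒵 => pZ q.1 q.2)
    (hpZ_prob : ∀ θ, ∫ z, pZ θ z ∂νZ = 1)
    -- the cost function
    (D : ℕ) (hD : 0 < D)
    (F : Fin D → 𝒵 → Θ → ℝ)
    (hF_meas : ∀ d, Measurable fun q : 𝒵 × Θ => F d q.1 q.2)
    -- all integrals are finite
    (hInt : ∀ δ : 𝒳 → Fin D, Measurable δ →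
      Integrable
        (fun q : Θ × 𝒳 × 𝒵 =>
          F (δ q.2.1) q.2.2 q.1 * (pΘ q.1 * pX q.1 q.2.1 * pZ q.1 q.2.2))
        (νΘ.prod (νX.prod νZ)))
    (hInt_a : ∀ (d : Fin D) (θ : Θ), Integrable (fun z => F d z θ * pZ θ z) νZ)
    -- the Bayes risk
    (J : (𝒳 → Fin D) → ℝ)
    (hJ : ∀ δ : 𝒳 → Fin D,
      J δ = ∫ θ, ∫ x, ∫ z, F (δ x) z θ * (pΘ θ * pX θ x * pZ θ z) ∂νZ ∂νX ∂νΘ)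
    -- the function a(θ, d)
    (a : Θ → Fin D → ℝ)
    (ha : ∀ θ d, a θ d = ∫ z, F d z θ * pZ θ z ∂νZ)
    -- the candidate optimal quantizer
    (δstar : 𝒳 → Fin D) (hδstar : Measurable δstar) :
    (∀ δ : 𝒳 → Fin D, Measurable δ → J δstar ≤ J δ) ↔
      (∀ᵐ x ∂(νX.withDensity fun x => ENNReal.ofReal (∫ θ, pΘ θ * pX θ x ∂νΘ)),
        ∀ d : Fin D,
          (∫ θ, a θ (δstar x) * (pΘ θ * pX θ x) ∂νΘ)
            ≤ ∫ θ, a θ d * (pΘ θ * pX θ x) ∂νΘ) := by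
  classical
  -- abbreviations
  set g : 𝒳 → Fin D → ℝ := fun x d => ∫ θ, a θ d * (pΘ θ * pX θ x) ∂νΘ with hg_def
  set m : 𝒳 → ℝ := fun x => ∫ θ, pΘ θ * pX θ x ∂νΘ with hm_def
  -- measurability of a
  have ha_meas : ∀ d, Measurable fun θ => a θ d := by
    intro d
    have hsm : StronglyMeasurable fun q : Θ × 𝒵 => F d q.2 q.1 * pZ q.1 q.2 :=
      (((hF_meas d).comp measurable_swap).mul hpZ_meas).stronglyMeasurable
    have h2 := hsm.integral_prod_right' (ν := νZ)
    have : (fun θ => a θ d) = fun θ => ∫ z, F d z θ * pZ θ z ∂νZ :=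
      funext fun θ => ha θ d
    rw [this]
    exact h2.measurable
  -- measurability of g
  have hg_meas : ∀ d, Measurable fun x => g x d := by
    intro d
    have hsm : StronglyMeasurable fun q : 𝒳 × Θ => a q.2 d * (pΘ q.2 * pX q.2 q.1) :=
      (((ha_meas d).comp measurable_snd).mul
        ((hpΘ_meas.comp measurable_snd).mul (hpX_meas.comp measurable_swap))).stronglyMeasurable
    exact hsm.integral_prod_right'.measurable
  -- measurability of m
  have hm_meas : Measurable m := by
    have hsm : StronglyMeasurable fun q : 𝒳 × Θ => pΘ q.2 * pX q.2 q.1 :=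
      ((hpΘ_meas.comp measurable_snd).mul (hpX_meas.comp measurable_swap)).stronglyMeasurable
    exact hsm.integral_prod_right'.measurable
  -- the inner z-integral
  have hz : ∀ (d : Fin D) (θ : Θ) (x : 𝒳),
      (∫ z, F d z θ * (pΘ θ * pX θ x * pZ θ z) ∂νZ) = a θ d * (pΘ θ * pX θ x) := by
    intro d θ x
    have h1 : ∀ z, F d z θ * (pΘ θ * pX θ x * pZ θ z)
        = (F d z θ * pZ θ z) * (pΘ θ * pX θ x) := fun z => by ring
    simp only [h1]
    rw [integral_mul_const, ha]
  -- integrability on the product Θ × 𝒳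
  have hProdInt : ∀ δ : 𝒳 → Fin D, Measurable δ →
      Integrable (fun q : Θ × 𝒳 => a q.1 (δ q.2) * (pΘ q.1 * pX q.1 q.2)) (νΘ.prod νX) := by
    intro δ hδ
    have h1 := hInt δ hδ
    have hmp := measurePreserving_prodAssoc νΘ νX νZ
    have h2 : Integrable ((fun q : Θ × 𝒳 × 𝒵 =>
        F (δ q.2.1) q.2.2 q.1 * (pΘ q.1 * pX q.1 q.2.1 * pZ q.1 q.2.2)) ∘
        (MeasurableEquiv.prodAssoc : (Θ × 𝒳) × 𝒵 ≃ᵐ Θ × 𝒳 × 𝒵)) ((νΘ.prod νX).prod νZ) :=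
      (hmp.integrable_comp_emb MeasurableEquiv.prodAssoc.measurableEmbedding).2 h1
    have h3 := h2.integral_prod_left
    refine h3.congr (Filter.Eventually.of_forall fun p => ?_)
    exact hz (δ p.2) p.1 p.2
  -- rewriting J
  have hJ_eq : ∀ δ : 𝒳 → Fin D, Measurable δ → J δ = ∫ x, g x (δ x) ∂νX := by
    intro δ hδ
    rw [hJ]
    simp only [hz]
    exact integral_integral_swap (hProdInt δ hδ)
  -- integrability of x ↦ g x (δ x)
  have hgx_int : ∀ δ : 𝒳 → Fin D, Measurable δ → Integrable (fun x => g x (δ x)) νX :=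
    fun δ hδ => (hProdInt δ hδ).integral_prod_right
  -- the pointwise-optimal quantizer
  have hS : ∀ x, (Finset.univ.filter fun d : Fin D => ∀ d', g x d ≤ g x d').Nonempty := by
    intro x
    obtain ⟨d, -, hd⟩ := Finset.exists_min_image Finset.univ (g x) ⟨⟨0, hD⟩, Finset.mem_univ _⟩
    exact ⟨d, Finset.mem_filter.2 ⟨Finset.mem_univ _, fun d' => hd d' (Finset.mem_univ _)⟩⟩
  set δopt : 𝒳 → Fin D :=
    fun x => (Finset.univ.filter fun d : Fin D => ∀ d', g x d ≤ g x d').min' (hS x)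
    with hδopt_def
  have hδopt_min : ∀ x d, g x (δopt x) ≤ g x d := by
    intro x d
    have hmem := Finset.min'_mem (Finset.univ.filter fun d : Fin D => ∀ d', g x d ≤ g x d') (hS x)
    exact (Finset.mem_filter.1 hmem).2 d
  have hQmeas : ∀ d : Fin D, MeasurableSet {x | ∀ d', g x d ≤ g x d'} := by
    intro d
    have : {x | ∀ d', g x d ≤ g x d'} = ⋂ d', {x | g x d ≤ g x d'} := by
      ext x; simp
    rw [this]
    exact MeasurableSet.iInter fun d' => measurableSet_le (hg_meas d) (hg_meas d')
  have hδopt_meas : Measurable δopt := by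
    apply measurable_to_countable'
    intro d
    have hset : δopt ⁻¹' {d} = {x | ∀ d', g x d ≤ g x d'} ∩
        ⋂ d' : Fin D, {x | ¬ (∀ d'', g x d' ≤ g x d'') ∨ d ≤ d'} := by
      ext x
      simp only [Set.mem_preimage, Set.mem_singleton_iff, Set.mem_inter_iff, Set.mem_iInter,
        Set.mem_setOf_eq]
      constructor
      · rintro rfl
        refine ⟨fun d' => hδopt_min x d', fun d' => ?_⟩
        by_cases h : ∀ d'', g x d' ≤ g x d''
        · exact Or.inr (Finset.min'_le _ _ (Finset.mem_filter.2 ⟨Finset.mem_univ _, h⟩))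
        · exact Or.inl h
      · rintro ⟨h1, h2⟩
        refine le_antisymm (Finset.min'_le _ _ (Finset.mem_filter.2 ⟨Finset.mem_univ _, h1⟩)) ?_
        have hmem := Finset.min'_mem
          (Finset.univ.filter fun d : Fin D => ∀ d', g x d ≤ g x d') (hS x)
        rcases h2 (δopt x) with h | h
        · exact absurd (Finset.mem_filter.1 hmem).2 h
        · exact h
    rw [hset]
    refine (hQmeas d).inter (MeasurableSet.iInter fun d' => ?_)
    by_cases h : d ≤ d'
    · have : {x : 𝒳 | ¬ (∀ d'', g x d' ≤ g x d'') ∨ d ≤ d'} = Set.univ := by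
        ext x; simp [h]
      rw [this]; exact MeasurableSet.univ
    · have : {x : 𝒳 | ¬ (∀ d'', g x d' ≤ g x d'') ∨ d ≤ d'} = {x | ∀ d'', g x d' ≤ g x d''}ᶜ := by
        ext x; simp [h]
      rw [this]; exact (hQmeas d').compl
  -- integrability of pΘ and pX sections
  have hpΘ_int : Integrable pΘ νΘ := by
    by_contra h
    have h1 := hpΘ_prob
    rw [integral_undef h] at h1
    exact zero_ne_one h1
  have hpX_int : ∀ θ, Integrable (fun x => pX θ x) νX := by
    intro θ
    by_contra h
    have h1 := hpX_prob θ
    rw [integral_undef h] at h1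
    exact zero_ne_one h1
  -- joint density of (θ, X) is integrable
  have hW_meas : Measurable fun q : Θ × 𝒳 => pΘ q.1 * pX q.1 q.2 :=
    (hpΘ_meas.comp measurable_fst).mul hpX_meas
  have hW_int : Integrable (fun q : Θ × 𝒳 => pΘ q.1 * pX q.1 q.2) (νΘ.prod νX) := by
    refine ⟨hW_meas.aestronglyMeasurable, ?_⟩
    rw [hasFiniteIntegral_iff_ofReal
      (Filter.Eventually.of_forall fun q => mul_nonneg (hpΘ_nn _) (hpX_nn _ _))]
    rw [lintegral_prod _ hW_meas.ennreal_ofReal.aemeasurable]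
    have hθ : ∀ θ, (∫⁻ x, ENNReal.ofReal (pΘ θ * pX θ x) ∂νX) = ENNReal.ofReal (pΘ θ) := by
      intro θ
      calc (∫⁻ x, ENNReal.ofReal (pΘ θ * pX θ x) ∂νX)
          = ∫⁻ x, ENNReal.ofReal (pΘ θ) * ENNReal.ofReal (pX θ x) ∂νX := by
            simp_rw [← ENNReal.ofReal_mul (hpΘ_nn θ)]
        _ = ENNReal.ofReal (pΘ θ) * ∫⁻ x, ENNReal.ofReal (pX θ x) ∂νX :=
            lintegral_const_mul _ ((hpX_meas.comp measurable_prodMk_left).ennreal_ofReal)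
        _ = ENNReal.ofReal (pΘ θ) * 1 := by
            rw [← ofReal_integral_eq_lintegral_ofReal (hpX_int θ)
              (Filter.Eventually.of_forall fun x => hpX_nn θ x), hpX_prob θ, ENNReal.ofReal_one]
        _ = ENNReal.ofReal (pΘ θ) := mul_one _
    simp_rw [hθ]
    rw [← ofReal_integral_eq_lintegral_ofReal hpΘ_int
      (Filter.Eventually.of_forall fun θ => hpΘ_nn θ), hpΘ_prob]
    simp
  have hsec : ∀ᵐ x ∂νX, Integrable (fun θ => pΘ θ * pX θ x) νΘ := hW_int.prod_left_ae
  -- where the marginal density vanishes, all g x d vanish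
  have hzero : ∀ᵐ x ∂νX, m x = 0 → ∀ d, g x d = 0 := by
    filter_upwards [hsec] with x hx hm0 d
    have hae : (fun θ => pΘ θ * pX θ x) =ᵐ[νΘ] 0 :=
      (integral_eq_zero_iff_of_nonneg (fun θ => mul_nonneg (hpΘ_nn θ) (hpX_nn θ x)) hx).1 hm0
    have h2 : (fun θ => a θ d * (pΘ θ * pX θ x)) =ᵐ[νΘ] 0 := by
      filter_upwards [hae] with θ hθ
      simp only [Pi.zero_apply] at hθ ⊢
      rw [hθ, mul_zero]
    have h3 : g x d = ∫ θ, (0 : ℝ) ∂νΘ := integral_congr_ae h2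
    simpa using h3
  have hm_nn : ∀ x, 0 ≤ m x := fun x =>
    integral_nonneg fun θ => mul_nonneg (hpΘ_nn θ) (hpX_nn θ x)
  constructor
  · -- optimality implies a.e. pointwise optimality
    intro hopt
    have h1 : J δstar ≤ J δopt := hopt δopt hδopt_meas
    rw [hJ_eq δstar hδstar, hJ_eq δopt hδopt_meas] at h1
    have hIs := hgx_int δstar hδstar
    have hIo := hgx_int δopt hδopt_meas
    have hdiff_int : Integrable (fun x => g x (δstar x) - g x (δopt x)) νX := hIs.sub hIo
    have hnn : ∀ x, 0 ≤ g x (δstar x) - g x (δopt x) :=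
      fun x => sub_nonneg.2 (hδopt_min x _)
    have hint0 : (∫ x, (g x (δstar x) - g x (δopt x)) ∂νX) = 0 := by
      rw [integral_sub hIs hIo]
      have h2 : (∫ x, g x (δstar x) ∂νX) - ∫ x, g x (δopt x) ∂νX ≤ 0 := by linarith
      have h3 : (0 : ℝ) ≤ (∫ x, g x (δstar x) ∂νX) - ∫ x, g x (δopt x) ∂νX := by
        rw [← integral_sub hIs hIo]
        exact integral_nonneg hnn
      linarith
    have hae0 := (integral_eq_zero_iff_of_nonneg hnn hdiff_int).1 hint0
    have hP : ∀ᵐ x ∂νX, ∀ d, g x (δstar x) ≤ g x d := by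
      filter_upwards [hae0] with x hx d
      have hx' : g x (δstar x) - g x (δopt x) = 0 := hx
      have : g x (δstar x) = g x (δopt x) := by linarith
      exact this ▸ hδopt_min x d
    exact Filter.Eventually.filter_mono
      ((withDensity_absolutelyContinuous νX _).ae_le) hP
  · -- a.e. pointwise optimality implies optimality
    intro hPw δ hδ
    have hP : ∀ᵐ x ∂νX, ENNReal.ofReal (m x) ≠ 0 → ∀ d, g x (δstar x) ≤ g x d :=
      (ae_withDensity_iff hm_meas.ennreal_ofReal).1 hPw
    rw [hJ_eq δstar hδstar, hJ_eq δ hδ]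
    have key : ∀ᵐ x ∂νX, g x (δstar x) ≤ g x (δ x) := by
      filter_upwards [hP, hzero] with x hx hx0
      by_cases hm0 : m x = 0
      · rw [hx0 hm0 (δstar x), hx0 hm0 (δ x)]
      · have hne : ENNReal.ofReal (m x) ≠ 0 := by
          intro h
          exact hm0 (le_antisymm (ENNReal.ofReal_eq_zero.1 h) (hm_nn x))
        exact hx hne (δ x)
    exact integral_mono_ae (hgx_int δstar hδstar) (hgx_int δ hδ) key
end

section
/- Consider a distributed estimation system with a random parameter θ with prior density p_Θ, observations Y_0, Y_1, …, Y_N that are conditionally independent given θ (i.e., the joint density factorizes as p_Θ(θ)·∏_{i=0}^N p_i(y_i|θ) with respect to σ-finite reference measures), local quantizers γ_j : 𝒴_j → {1,…,D_j} for j = 1,…,N, a fixed estimator γ_0, and a cost function C. Fix i ∈ {1,…,N} and fix measurable γ_j for all j ≠ i. Define, for each θ and d ∈ {1,…,D_i}, a(θ,d) = E[C(γ_0(Y_0, U_1,…,U_{i−1}, d, U_{i+1},…,U_N), U_1,…,U_{i−1}, d, U_{i+1},…,U_N, θ) | θ], where U_j = γ_j(Y_j). Then γ_i minimizes the Bayes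 risk J(γ) = E[C(γ_0(Y_0, γ_1(Y_1),…,γ_N(Y_N)), γ_1(Y_1),…,γ_N(Y_N), θ)] over all measurable quantizers 𝒴_i → {1,…,D_i} only if, for almost every y_i with respect to the marginal distribution of Y_i, γ_i(y_i) minimizes d ↦ ∫ a(θ,d) p_Θ(θ) p_i(y_i|θ) dν_Θ(θ) over d ∈ {1,…,D_i}. -/
open MeasureTheory

private lemma meas_comp_fin {α U : Type*} [MeasurableSpace α] [MeasurableSpace U]
    [Countable U] [MeasurableSingletonClass U] {u : α → U} (hu : Measurable u)
    {H : α → U → ℝ} (hH : ∀ c, Measurable fun a => H a c) :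
    Measurable fun a => H a (u a) := by
  have h : Measurable fun q : α × U => H q.1 q.2 :=
    measurable_from_prod_countable_left fun c => hH c
  exact h.comp (measurable_id.prodMk hu)

/-- In a distributed estimation system with conditionally independent
observations `Y_0, Y_1, …, Y_N`, a fixed estimator `γ0`, and fixed measurable
quantizers `γ_j` for `j ≠ i`, the quantizer `γ_i` minimizes the Bayes risk only if,
for a.e. `y_i` w.r.t. the marginal distribution of `Y_i`, `γ_i(y_i)` minimizes
`d ↦ ∫ a(θ,d) pΘ(θ) p_i(y_i|θ) dνΘ(θ)`. -/
theorem necessary_condition_optimal_quantizer_indep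
    {Θ 𝒴₀ : Type*} [MeasurableSpace Θ] [MeasurableSpace 𝒴₀]
    {N : ℕ} (𝒴 : Fin N → Type*) [∀ j, MeasurableSpace (𝒴 j)]
    (νΘ : Measure Θ) (ν₀ : Measure 𝒴₀) (ν : ∀ j, Measure (𝒴 j))
    [SigmaFinite νΘ] [SigmaFinite ν₀] [∀ j, SigmaFinite (ν j)]
    -- prior density of θ and conditional densities of the observations given θ
    (pΘ : Θ → ℝ) (hpΘ_nn : ∀ θ, 0 ≤ pΘ θ) (hpΘ_meas : Measurable pΘ)
    (hpΘ_prob : ∫ θ, pΘ θ ∂νΘ = 1)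
    (p₀ : Θ → 𝒴₀ → ℝ) (hp₀_nn : ∀ θ y, 0 ≤ p₀ θ y)
    (hp₀_meas : Measurable fun q : Θ × 𝒴₀ => p₀ q.1 q.2)
    (hp₀_prob : ∀ θ, ∫ y, p₀ θ y ∂ν₀ = 1)
    (p : ∀ j, Θ → 𝒴 j → ℝ) (hp_nn : ∀ j θ y, 0 ≤ p j θ y)
    (hp_meas : ∀ j, Measurable fun q : Θ × 𝒴 j => p j q.1 q.2)
    (hp_prob : ∀ j θ, ∫ y, p j θ y ∂(ν j) = 1)
    -- numbers of quantization levels, estimator and cost function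
    (D : Fin N → ℕ) (hD : ∀ j, 0 < D j)
    (γ₀ : 𝒴₀ → (∀ j, Fin (D j)) → Θ)
    (hγ₀_meas : ∀ u, Measurable fun y₀ => γ₀ y₀ u)
    (C : Θ → (∀ j, Fin (D j)) → Θ → ℝ)
    (hC_meas : ∀ u, Measurable fun q : Θ × Θ => C q.1 u q.2)
    -- the strategy, with quantizers γ_j fixed for j ≠ i
    (γ : ∀ j, 𝒴 j → Fin (D j)) (hγ_meas : ∀ j, Measurable (γ j))
    (i : Fin N)
    -- all integrals are finite
    (hInt : ∀ γ' : ∀ j, 𝒴 j → Fin (D j), (∀ j, Measurable (γ' j)) →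
      Integrable
        (fun q : Θ × 𝒴₀ × (∀ j, 𝒴 j) =>
          C (γ₀ q.2.1 fun j => γ' j (q.2.2 j)) (fun j => γ' j (q.2.2 j)) q.1
            * (pΘ q.1 * p₀ q.1 q.2.1 * ∏ j, p j q.1 (q.2.2 j)))
        (νΘ.prod (ν₀.prod (Measure.pi ν))))
    -- the Bayes risk
    (J : (∀ j, 𝒴 j → Fin (D j)) → ℝ)
    (hJ : ∀ γ' : ∀ j, 𝒴 j → Fin (D j),
      J γ' = ∫ θ, ∫ y₀, ∫ y,
        C (γ₀ y₀ fun j => γ' j (y j)) (fun j => γ' j (y j)) θ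
          * (pΘ θ * p₀ θ y₀ * ∏ j, p j θ (y j)) ∂(Measure.pi ν) ∂ν₀ ∂νΘ)
    -- a(θ, d): conditional expectation of the cost given θ, with d in place of U_i
    (a : Θ → Fin (D i) → ℝ)
    (ha : ∀ θ d, a θ d = ∫ y₀, ∫ y,
      C (γ₀ y₀ (Function.update (fun j => γ j (y j)) i d))
          (Function.update (fun j => γ j (y j)) i d) θ
        * (p₀ θ y₀ * ∏ j, p j θ (y j)) ∂(Measure.pi ν) ∂ν₀)
    -- γ_i minimizes the Bayes risk over all measurable quantizers at sensor i
    (hmin : ∀ δ : 𝒴 i → Fin (D i), Measurable δ → J γ ≤ J (Function.update γ i δ)) :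
    -- necessary condition: a.e. pointwise minimization w.r.t. the marginal of Y_i
    ∀ᵐ yᵢ ∂((ν i).withDensity fun y => ENNReal.ofReal (∫ θ, pΘ θ * p i θ y ∂νΘ)),
      ∀ d : Fin (D i),
        (∫ θ, a θ (γ i yᵢ) * (pΘ θ * p i θ yᵢ) ∂νΘ)
          ≤ ∫ θ, a θ d * (pΘ θ * p i θ yᵢ) ∂νΘ := by
  classical
  cases N with
  | zero => exact i.elim0
  | succ n =>
  -- notation
  set Y' : Type _ := ∀ j : Fin n, 𝒴 (i.succAbove j) with hY'
  set μ' : Measure Y' := Measure.pi (fun j => ν (i.succAbove j)) with hμ'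
  set e : (∀ j, 𝒴 j) ≃ᵐ 𝒴 i × Y' := MeasurableEquiv.piFinSuccAbove 𝒴 i with he
  have hme : MeasurePreserving e (Measure.pi ν) ((ν i).prod μ') :=
    measurePreserving_piFinSuccAbove ν i
  set K : Fin (D i) → Y' → (∀ j, Fin (D j)) :=
    fun d y' => i.insertNth d (fun j => γ (i.succAbove j) (y' j)) with hKdef
  set W : Fin (D i) → Θ × (𝒴₀ × Y') → ℝ :=
    fun d r => C (γ₀ r.2.1 (K d r.2.2)) (K d r.2.2) r.1
      * (p₀ r.1 r.2.1 * ∏ k, p (i.succAbove k) r.1 (r.2.2 k)) with hWdef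
  set g : 𝒴 i → Fin (D i) → ℝ :=
    fun y d => ∫ θ, a θ d * (pΘ θ * p i θ y) ∂νΘ with hgdef
  -- pointwise facts about insertNth
  have fact1 : ∀ (d : Fin (D i)) (yi : 𝒴 i) (y' : Y'),
      Function.update (fun j => γ j (i.insertNth yi y' j)) i d = K d y' := by
    intro d yi y'
    funext j
    refine Fin.succAboveCases i ?_ ?_ j
    · simp [hKdef]
    · intro k
      simp [Function.update_of_ne (Fin.succAbove_ne i k), hKdef,
        Fin.insertNth_apply_succAbove]
  have fact1' : ∀ (δ : 𝒴 i → Fin (D i)) (yi : 𝒴 i) (y' : Y'),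
      (fun j => Function.update γ i δ j (i.insertNth yi y' j)) = K (δ yi) y' := by
    intro δ yi y'
    funext j
    refine Fin.succAboveCases i ?_ ?_ j
    · simp [hKdef]
    · intro k
      simp [Function.update_of_ne (Fin.succAbove_ne i k), hKdef,
        Fin.insertNth_apply_succAbove]
  have fact2 : ∀ (θ : Θ) (yi : 𝒴 i) (y' : Y'),
      (∏ j, p j θ (i.insertNth yi y' j))
        = p i θ yi * ∏ k, p (i.succAbove k) θ (y' k) := by
    intro θ yi y'
    rw [Fin.prod_univ_succAbove (fun j => p j θ (i.insertNth yi y' j)) i]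
    simp [Fin.insertNth_apply_succAbove]
  -- STEP A : a θ d in reduced form
  have stepA : ∀ θ d, a θ d = ∫ y₀, ∫ y', W d (θ, (y₀, y')) ∂μ' ∂ν₀ := by
    intro θ d
    rw [ha]
    congr 1
    funext y₀
    have h1 : (∫ y, C (γ₀ y₀ (Function.update (fun j => γ j (y j)) i d))
          (Function.update (fun j => γ j (y j)) i d) θ
          * (p₀ θ y₀ * ∏ j, p j θ (y j)) ∂(Measure.pi ν))
        = ∫ z, C (γ₀ y₀ (Function.update (fun j => γ j (e.symm z j)) i d))
          (Function.update (fun j => γ j (e.symm z j)) i d) θ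
          * (p₀ θ y₀ * ∏ j, p j θ (e.symm z j)) ∂((ν i).prod μ') :=
      ((hme.symm).integral_comp'
        (fun y => C (γ₀ y₀ (Function.update (fun j => γ j (y j)) i d))
          (Function.update (fun j => γ j (y j)) i d) θ
          * (p₀ θ y₀ * ∏ j, p j θ (y j)))).symm
    rw [h1]
    have h2 : ∀ z : 𝒴 i × Y',
        C (γ₀ y₀ (Function.update (fun j => γ j (e.symm z j)) i d))
          (Function.update (fun j => γ j (e.symm z j)) i d) θ
          * (p₀ θ y₀ * ∏ j, p j θ (e.symm z j))
        = p i θ z.1 * W d (θ, (y₀, z.2)) := by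
      rintro ⟨yi, y'⟩
      have hes : (e.symm (yi, y') : ∀ j, 𝒴 j) = i.insertNth yi y' := rfl
      rw [hes, fact1 d yi y', fact2 θ yi y']
      simp only [hWdef]
      ring
    calc (∫ z, C (γ₀ y₀ (Function.update (fun j => γ j (e.symm z j)) i d))
          (Function.update (fun j => γ j (e.symm z j)) i d) θ
          * (p₀ θ y₀ * ∏ j, p j θ (e.symm z j)) ∂((ν i).prod μ'))
        = ∫ z, p i θ z.1 * W d (θ, (y₀, z.2)) ∂((ν i).prod μ') :=
          integral_congr_ae (Filter.Eventually.of_forall h2)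
      _ = (∫ yi, p i θ yi ∂ν i) * ∫ y', W d (θ, (y₀, y')) ∂μ' :=
          integral_prod_mul (fun yi => p i θ yi) (fun y' => W d (θ, (y₀, y')))
      _ = ∫ y', W d (θ, (y₀, y')) ∂μ' := by rw [hp_prob i θ, one_mul]
  -- the rearranged measure-preserving equivalence
  set E : (𝒴 i × (Θ × (𝒴₀ × Y'))) ≃ᵐ (Θ × (𝒴₀ × (∀ j, 𝒴 j))) :=
    ((MeasurableEquiv.prodAssoc.symm).trans
      ((MeasurableEquiv.prodCongr MeasurableEquiv.prodComm (MeasurableEquiv.refl _)).trans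
        (MeasurableEquiv.prodAssoc.trans
          (MeasurableEquiv.prodCongr (MeasurableEquiv.refl _)
            ((MeasurableEquiv.prodAssoc.symm).trans
              ((MeasurableEquiv.prodCongr MeasurableEquiv.prodComm
                (MeasurableEquiv.refl _)).trans MeasurableEquiv.prodAssoc)))))).trans
      (MeasurableEquiv.prodCongr (MeasurableEquiv.refl _)
        (MeasurableEquiv.prodCongr (MeasurableEquiv.refl _) e.symm)) with hE
  have hEapp : ∀ w : 𝒴 i × (Θ × (𝒴₀ × Y')),
      E w = (w.2.1, (w.2.2.1, e.symm (w.1, w.2.2.2))) := fun _ => rfl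
  have hEmp : MeasurePreserving E ((ν i).prod (νΘ.prod (ν₀.prod μ')))
      (νΘ.prod (ν₀.prod (Measure.pi ν))) := by
    have s1 : MeasurePreserving (MeasurableEquiv.prodAssoc.symm :
        (𝒴 i × (Θ × (𝒴₀ × Y'))) ≃ᵐ ((𝒴 i × Θ) × (𝒴₀ × Y')))
        ((ν i).prod (νΘ.prod (ν₀.prod μ'))) (((ν i).prod νΘ).prod (ν₀.prod μ')) :=
      (measurePreserving_prodAssoc (ν i) νΘ (ν₀.prod μ')).symm
    have s2 : MeasurePreserving
        (MeasurableEquiv.prodCongr MeasurableEquiv.prodComm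
          (MeasurableEquiv.refl (𝒴₀ × Y')))
        (((ν i).prod νΘ).prod (ν₀.prod μ')) ((νΘ.prod (ν i)).prod (ν₀.prod μ')) :=
      Measure.measurePreserving_swap.prod (MeasurePreserving.id _)
    have s3 : MeasurePreserving (MeasurableEquiv.prodAssoc :
        ((Θ × 𝒴 i) × (𝒴₀ × Y')) ≃ᵐ (Θ × (𝒴 i × (𝒴₀ × Y'))))
        ((νΘ.prod (ν i)).prod (ν₀.prod μ')) (νΘ.prod ((ν i).prod (ν₀.prod μ'))) :=
      measurePreserving_prodAssoc νΘ (ν i) (ν₀.prod μ')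
    have s4 : MeasurePreserving
        ((MeasurableEquiv.prodAssoc.symm).trans
          ((MeasurableEquiv.prodCongr MeasurableEquiv.prodComm
            (MeasurableEquiv.refl Y')).trans MeasurableEquiv.prodAssoc) :
          (𝒴 i × (𝒴₀ × Y')) ≃ᵐ (𝒴₀ × (𝒴 i × Y')))
        ((ν i).prod (ν₀.prod μ')) (ν₀.prod ((ν i).prod μ')) := by
      have t1 : MeasurePreserving (MeasurableEquiv.prodAssoc.symm :
          (𝒴 i × (𝒴₀ × Y')) ≃ᵐ ((𝒴 i × 𝒴₀) × Y'))
          ((ν i).prod (ν₀.prod μ')) (((ν i).prod ν₀).prod μ') :=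
        (measurePreserving_prodAssoc (ν i) ν₀ μ').symm
      have t2 : MeasurePreserving
          (MeasurableEquiv.prodCongr MeasurableEquiv.prodComm (MeasurableEquiv.refl Y'))
          (((ν i).prod ν₀).prod μ') ((ν₀.prod (ν i)).prod μ') :=
        Measure.measurePreserving_swap.prod (MeasurePreserving.id _)
      have t3 : MeasurePreserving (MeasurableEquiv.prodAssoc :
          ((𝒴₀ × 𝒴 i) × Y') ≃ᵐ (𝒴₀ × (𝒴 i × Y')))
          ((ν₀.prod (ν i)).prod μ') (ν₀.prod ((ν i).prod μ')) :=
        measurePreserving_prodAssoc ν₀ (ν i) μ'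
      exact (t3.comp t2).comp t1
    have s5 : MeasurePreserving
        (MeasurableEquiv.prodCongr (MeasurableEquiv.refl Θ)
          ((MeasurableEquiv.prodAssoc.symm).trans
            ((MeasurableEquiv.prodCongr MeasurableEquiv.prodComm
              (MeasurableEquiv.refl Y')).trans MeasurableEquiv.prodAssoc)))
        (νΘ.prod ((ν i).prod (ν₀.prod μ'))) (νΘ.prod (ν₀.prod ((ν i).prod μ'))) :=
      (MeasurePreserving.id νΘ).prod s4
    have s6 : MeasurePreserving
        (MeasurableEquiv.prodCongr (MeasurableEquiv.refl Θ)
          (MeasurableEquiv.prodCongr (MeasurableEquiv.refl 𝒴₀) e.symm))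
        (νΘ.prod (ν₀.prod ((ν i).prod μ'))) (νΘ.prod (ν₀.prod (Measure.pi ν))) :=
      (MeasurePreserving.id νΘ).prod ((MeasurePreserving.id ν₀).prod hme.symm)
    exact s6.comp ((s5.comp (s3.comp (s2.comp s1))))
  -- KEY identity for the Bayes risk
  have key : ∀ δ : 𝒴 i → Fin (D i), Measurable δ →
      (J (Function.update γ i δ) = ∫ y, g y (δ y) ∂(ν i))
        ∧ Integrable (fun y => g y (δ y)) (ν i) := by
    intro δ hδ
    set γ' := Function.update γ i δ with hγ'def
    have hγ'm : ∀ j, Measurable (γ' j) := by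
      intro j
      rcases eq_or_ne j i with rfl | hj
      · simpa [hγ'def] using hδ
      · simpa [hγ'def, Function.update_of_ne hj] using hγ_meas j
    set F : Θ × 𝒴₀ × (∀ j, 𝒴 j) → ℝ := fun q =>
      C (γ₀ q.2.1 fun j => γ' j (q.2.2 j)) (fun j => γ' j (q.2.2 j)) q.1
        * (pΘ q.1 * p₀ q.1 q.2.1 * ∏ j, p j q.1 (q.2.2 j)) with hFdef
    have hF : Integrable F (νΘ.prod (ν₀.prod (Measure.pi ν))) := hInt γ' hγ'm
    have hJ1 : J γ' = ∫ q, F q ∂(νΘ.prod (ν₀.prod (Measure.pi ν))) := by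
      rw [hJ γ', integral_prod _ hF]
      refine integral_congr_ae ?_
      filter_upwards [hF.prod_right_ae] with θ hθ
      rw [integral_prod _ hθ]
    have hGint : Integrable (fun w => F (E w)) ((ν i).prod (νΘ.prod (ν₀.prod μ'))) :=
      (hEmp.integrable_comp_emb E.measurableEmbedding).2 hF
    have hJ2 : ∫ q, F q ∂(νΘ.prod (ν₀.prod (Measure.pi ν)))
        = ∫ w, F (E w) ∂((ν i).prod (νΘ.prod (ν₀.prod μ'))) :=
      (hEmp.integral_comp' F).symm
    have hJ3 : ∫ w, F (E w) ∂((ν i).prod (νΘ.prod (ν₀.prod μ')))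
        = ∫ y, ∫ r, F (E (y, r)) ∂(νΘ.prod (ν₀.prod μ')) ∂(ν i) :=
      integral_prod _ hGint
    have hinner : ∀ᵐ y ∂(ν i),
        (∫ r, F (E (y, r)) ∂(νΘ.prod (ν₀.prod μ'))) = g y (δ y) := by
      filter_upwards [hGint.prod_right_ae] with y hy
      have hfun : (fun r : Θ × (𝒴₀ × Y') => F (E (y, r)))
          = fun r => pΘ r.1 * p i r.1 y * W (δ y) r := by
        funext r
        obtain ⟨θ, y₀, y'⟩ := r
        rw [hEapp]
        show C (γ₀ y₀ fun j => γ' j (e.symm (y, y') j))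
            (fun j => γ' j (e.symm (y, y') j)) θ
            * (pΘ θ * p₀ θ y₀ * ∏ j, p j θ (e.symm (y, y') j))
          = pΘ θ * p i θ y * W (δ y) (θ, (y₀, y'))
        have hes : (e.symm (y, y') : ∀ j, 𝒴 j) = i.insertNth y y' := rfl
        rw [hγ'def, hes, fact1' δ y y', fact2 θ y y']
        simp only [hWdef]
        ring
      rw [hfun] at hy ⊢
      rw [integral_prod _ hy]
      have hg' : g y (δ y) = ∫ θ, a θ (δ y) * (pΘ θ * p i θ y) ∂νΘ := by rw [hgdef]
      rw [hg']
      refine integral_congr_ae ?_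
      filter_upwards [hy.prod_right_ae] with θ hθ
      show (∫ z : 𝒴₀ × Y', pΘ θ * p i θ y * W (δ y) (θ, z) ∂(ν₀.prod μ'))
        = a θ (δ y) * (pΘ θ * p i θ y)
      replace hθ : Integrable (fun z : 𝒴₀ × Y' =>
          pΘ θ * p i θ y * W (δ y) (θ, z)) (ν₀.prod μ') := hθ
      by_cases hc : pΘ θ * p i θ y = 0
      · rw [hc]
        simp
      · have hW : Integrable (fun z : 𝒴₀ × Y' => W (δ y) (θ, z)) (ν₀.prod μ') := by
          have h2 := hθ.const_mul (pΘ θ * p i θ y)⁻¹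
          exact h2.congr (Filter.Eventually.of_forall fun z =>
            inv_mul_cancel_left₀ hc _)
        rw [integral_const_mul, integral_prod _ hW, stepA θ (δ y)]
        exact mul_comm _ _
    constructor
    · rw [hJ1, hJ2, hJ3]
      exact integral_congr_ae hinner
    · exact (hGint.integral_prod_left).congr hinner
  -- measurability of the big integrand defining `a`
  have hbig_meas : ∀ d : Fin (D i), Measurable
      (fun r : (Θ × 𝒴₀) × (∀ j, 𝒴 j) =>
        C (γ₀ r.1.2 (Function.update (fun j => γ j (r.2 j)) i d))
          (Function.update (fun j => γ j (r.2 j)) i d) r.1.1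
          * (p₀ r.1.1 r.1.2 * ∏ j, p j r.1.1 (r.2 j))) := by
    intro d
    have hu : Measurable (fun r : (Θ × 𝒴₀) × (∀ j, 𝒴 j) =>
        Function.update (fun j => γ j (r.2 j)) i d) := by
      refine measurable_pi_iff.2 fun j => ?_
      rcases eq_or_ne j i with rfl | hj
      · simp only [Function.update_self]
        exact measurable_const
      · simp only [Function.update_of_ne hj]
        exact (hγ_meas j).comp ((measurable_pi_apply j).comp measurable_snd)
    refine meas_comp_fin hu (H := fun r c =>
      C (γ₀ r.1.2 c) c r.1.1 * (p₀ r.1.1 r.1.2 * ∏ j, p j r.1.1 (r.2 j))) ?_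
    intro c
    refine ((hC_meas c).comp (((hγ₀_meas c).comp
      (measurable_snd.comp measurable_fst)).prodMk
      (measurable_fst.comp measurable_fst))).mul ?_
    refine ((hp₀_meas).comp ((measurable_fst.comp measurable_fst).prodMk
      (measurable_snd.comp measurable_fst))).mul ?_
    exact Finset.measurable_prod _ fun j _ =>
      (hp_meas j).comp ((measurable_fst.comp measurable_fst).prodMk
        ((measurable_pi_apply j).comp measurable_snd))
  have ha_meas : ∀ d : Fin (D i), Measurable fun θ => a θ d := by
    intro d
    have h0 := (hbig_meas d).stronglyMeasurable.integral_prod_right' (ν := Measure.pi ν)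
    have h1 := h0.integral_prod_right' (ν := ν₀)
    have h2 := h1.measurable
    simp only [ha]
    exact h2
  have hg_meas : ∀ d : Fin (D i), Measurable fun y => g y d := by
    intro d
    have hfm : Measurable (fun q : Θ × 𝒴 i => a q.1 d * (pΘ q.1 * p i q.1 q.2)) :=
      ((ha_meas d).comp measurable_fst).mul
        ((hpΘ_meas.comp measurable_fst).mul (hp_meas i))
    have := (hfm.stronglyMeasurable.integral_prod_left' (μ := νΘ)).measurable
    simp only [hgdef]
    exact this
  -- the pointwise-optimal quantizer
  haveI : Nonempty (Fin (D i)) := ⟨⟨0, hD i⟩⟩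
  have hPex : ∀ y : 𝒴 i, ∃ d : Fin (D i), ∀ d', g y d ≤ g y d' := by
    intro y
    obtain ⟨d, -, hd⟩ := Finset.exists_min_image Finset.univ (g y)
      ⟨Classical.arbitrary _, Finset.mem_univ _⟩
    exact ⟨d, fun d' => hd d' (Finset.mem_univ _)⟩
  have hSne : ∀ y : 𝒴 i,
      (Finset.univ.filter (fun d => ∀ d', g y d ≤ g y d')).Nonempty := by
    intro y
    obtain ⟨d, hd⟩ := hPex y
    exact ⟨d, Finset.mem_filter.2 ⟨Finset.mem_univ _, hd⟩⟩
  set δstar : 𝒴 i → Fin (D i) := fun y =>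
    (Finset.univ.filter (fun d => ∀ d', g y d ≤ g y d')).min' (hSne y) with hδstar
  have hPδ : ∀ y, ∀ d', g y (δstar y) ≤ g y d' := fun y =>
    (Finset.mem_filter.1 (Finset.min'_mem _ (hSne y))).2
  have hmP : ∀ b : Fin (D i), MeasurableSet {y : 𝒴 i | ∀ d', g y b ≤ g y d'} := by
    intro b
    have : {y : 𝒴 i | ∀ d', g y b ≤ g y d'} = ⋂ d', {y | g y b ≤ g y d'} := by
      ext y; simp
    rw [this]
    exact MeasurableSet.iInter fun d' => measurableSet_le (hg_meas b) (hg_meas d')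
  have hδmeas : Measurable δstar := by
    refine measurable_to_countable' fun c => ?_
    have hset : δstar ⁻¹' {c}
        = {y | ∀ d', g y c ≤ g y d'}
          ∩ ⋂ b : Fin (D i), {y | b < c → ¬ ∀ d', g y b ≤ g y d'} := by
      ext y
      simp only [Set.mem_preimage, Set.mem_singleton_iff, Set.mem_inter_iff,
        Set.mem_setOf_eq, Set.mem_iInter]
      constructor
      · rintro rfl
        refine ⟨hPδ y, fun b hb hPb => ?_⟩
        exact absurd (Finset.min'_le _ b
          (Finset.mem_filter.2 ⟨Finset.mem_univ _, hPb⟩)) (not_le.2 hb)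
      · rintro ⟨hc, hlt⟩
        have h1 : δstar y ≤ c := Finset.min'_le _ _
          (Finset.mem_filter.2 ⟨Finset.mem_univ _, hc⟩)
        rcases lt_or_eq_of_le h1 with h | h
        · exact absurd (hPδ y) (hlt _ h)
        · exact h
    rw [hset]
    refine (hmP c).inter (MeasurableSet.iInter fun b => ?_)
    by_cases hb : b < c
    · have : {y : 𝒴 i | b < c → ¬ ∀ d', g y b ≤ g y d'}
          = {y : 𝒴 i | ∀ d', g y b ≤ g y d'}ᶜ := by
        ext y; simp [hb]
      rw [this]
      exact (hmP b).compl
    · have : {y : 𝒴 i | b < c → ¬ ∀ d', g y b ≤ g y d'} = Set.univ := by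
        ext y; simp [hb]
      rw [this]
      exact MeasurableSet.univ
  -- optimality comparison
  obtain ⟨hJ2', hint2⟩ := key δstar hδmeas
  obtain ⟨hJ1', hint1⟩ := key (γ i) (hγ_meas i)
  rw [Function.update_eq_self] at hJ1'
  have hle : ∫ y, g y (γ i y) ∂(ν i) ≤ ∫ y, g y (δstar y) ∂(ν i) := by
    rw [← hJ1', ← hJ2']
    exact hmin δstar hδmeas
  have hge : ∫ y, g y (δstar y) ∂(ν i) ≤ ∫ y, g y (γ i y) ∂(ν i) :=
    integral_mono hint2 hint1 fun y => hPδ y (γ i y)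
  have heq0 : ∫ y, (g y (γ i y) - g y (δstar y)) ∂(ν i) = 0 := by
    rw [integral_sub hint1 hint2]
    linarith
  have hz : (fun y => g y (γ i y) - g y (δstar y)) =ᵐ[ν i] 0 :=
    (integral_eq_zero_iff_of_nonneg
      (fun y => sub_nonneg.2 (hPδ y (γ i y))) (hint1.sub hint2)).1 heq0
  have hν : ∀ᵐ y ∂(ν i), ∀ d : Fin (D i), g y (γ i y) ≤ g y d := by
    filter_upwards [hz] with y hy d
    have h0 : g y (γ i y) - g y (δstar y) = 0 := by simpa using hy
    have h1 : g y (γ i y) = g y (δstar y) := sub_eq_zero.1 h0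
    rw [h1]
    exact hPδ y d
  have hfinal := hν.filter_mono
    ((withDensity_absolutelyContinuous (ν i)
      (fun y => ENNReal.ofReal (∫ θ, pΘ θ * p i θ y ∂νΘ))).ae_le)
  filter_upwards [hfinal] with y hy d
  have := hy d
  rw [hgdef] at this
  simpa using this
end

section
/- Let N and R be positive integers, let I* > 0 and F_b be real numbers with F_b ≥ I*/2, and let D : {1,…,N} → ℕ with D_i ≥ 2 for all i and ∑_{i=1}^N ⌈log₂ D_i⌉ ≤ R. Let F : {1,…,N} → ℝ satisfy 0 ≤ F_i ≤ I* for all i, and F_i ≤ F_b for every i with D_i = 2. Then ∑_{i=1}^N F_i ≤ R · F_b. Consequently, under a total bit-rate constraint R, if there exists a binary quantization rule whose per-sensor Fisher information contribution F_b is at least half the full-observation Fisher information I* and at least that of any admissible binary rule, then employing R identical sensors each sending one bit is optimal. -/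
/-! A binary sensor costs one bit and contributes at most `F_b`; a sensor with `D ≥ 3` levels
costs at least two bits but, by the data processing inequality, contributes at most
`I* ≤ 2 F_b`. So every sensor contributes at most `F_b` per bit spent, and summing over the
rate budget gives `∑ F_i ≤ R F_b`. -/

theorem Nat.two_le_clog_two_of_two_lt {d : ℕ} (hd : 2 < d) : 2 ≤ Nat.clog 2 d :=
  (Nat.lt_clog_iff_pow_lt one_lt_two).2 (by simpa using hd)

theorem le_clog_two_mul_of_le_two_mul {d : ℕ} {f I Fb : ℝ} (hd : 2 ≤ d) (hFb : 0 ≤ Fb)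
    (hI : I ≤ 2 * Fb) (hfI : f ≤ I) (hbinary : d = 2 → f ≤ Fb) :
    f ≤ Nat.clog 2 d * Fb := by
  rcases hd.eq_or_lt with rfl | hd
  · simpa [Nat.clog_eq_one le_rfl le_rfl] using hbinary rfl
  · have hbits : (2 : ℝ) ≤ Nat.clog 2 d := by exact_mod_cast Nat.two_le_clog_two_of_two_lt hd
    calc f ≤ 2 * Fb := hfI.trans hI
      _ ≤ Nat.clog 2 d * Fb := mul_le_mul_of_nonneg_right hbits hFb

theorem sum_le_mul_of_le_clog_two_mul {ι : Type*} (s : Finset ι) {D : ι → ℕ} {F : ι → ℝ}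
    {R : ℕ} {Fb : ℝ} (hFb : 0 ≤ Fb) (hrate : ∑ i ∈ s, Nat.clog 2 (D i) ≤ R)
    (hF : ∀ i ∈ s, F i ≤ Nat.clog 2 (D i) * Fb) :
    ∑ i ∈ s, F i ≤ R * Fb :=
  calc ∑ i ∈ s, F i ≤ ∑ i ∈ s, (Nat.clog 2 (D i) : ℝ) * Fb := Finset.sum_le_sum hF
    _ = (∑ i ∈ s, Nat.clog 2 (D i) : ℕ) * Fb := by push_cast; rw [Finset.sum_mul]
    _ ≤ R * Fb := mul_le_mul_of_nonneg_right (by exact_mod_cast hrate) hFb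

theorem binary_quantizers_optimal_under_rate_constraint_general
    (N R : ℕ)
    (Istar Fb : ℝ) (hIstar : 0 < Istar) (hFb : Istar / 2 ≤ Fb)
    (D : Fin N → ℕ) (hD : ∀ i, 2 ≤ D i)
    (hrate : ∑ i, Nat.clog 2 (D i) ≤ R)
    (F : Fin N → ℝ)
    (hF_dpi : ∀ i, F i ≤ Istar)
    (hF_binary : ∀ i, D i = 2 → F i ≤ Fb) :
    ∑ i, F i ≤ (R : ℝ) * Fb := by
  have hFb0 : 0 ≤ Fb := by linarith
  refine sum_le_mul_of_le_clog_two_mul _ hFb0 hrate fun i _ => ?_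
  exact le_clog_two_mul_of_le_two_mul (hD i) hFb0 (by linarith) (hF_dpi i) (hF_binary i)

/-- Under a total bit-rate constraint `∑ ⌈log₂ D_i⌉ ≤ R` (the ceiling
log being `Nat.clog 2`), if every per-sensor Fisher information contribution
satisfies `0 ≤ F_i ≤ I*`, every binary sensor (`D_i = 2`) satisfies `F_i ≤ F_b`,
and `F_b ≥ I*/2`, then the total Fisher information satisfies `∑ F_i ≤ R · F_b`;
hence `R` identical one-bit sensors (each achieving `F_b`) are optimal. -/
theorem binary_quantizers_optimal_under_rate_constraint
    (N R : ℕ) (hN : 0 < N) (hR : 0 < R)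
    (Istar Fb : ℝ) (hIstar : 0 < Istar) (hFb : Istar / 2 ≤ Fb)
    (D : Fin N → ℕ) (hD : ∀ i, 2 ≤ D i)
    (hrate : ∑ i, Nat.clog 2 (D i) ≤ R)
    (F : Fin N → ℝ)
    (hF_nonneg : ∀ i, 0 ≤ F i)
    (hF_dpi : ∀ i, F i ≤ Istar)
    (hF_binary : ∀ i, D i = 2 → F i ≤ Fb) :
    ∑ i, F i ≤ (R : ℝ) * Fb :=
  binary_quantizers_optimal_under_rate_constraint_general N R Istar Fb hIstar hFb D hD hrate F
    hF_dpi hF_binary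
end

section
/- Let Q(x) = (1/√(2π)) ∫_x^∞ e^{−t²/2} dt, let σ > 0, and let π be a probability measure on ℝ with mean μ_θ and variance σ_θ². Then (1/(2πσ²)) ∫ exp(−(θ − μ_θ)²/σ²) / ((1 − Q((θ − μ_θ)/σ))·Q((θ − μ_θ)/σ)) dπ(θ) ≥ (2/(πσ²)) · exp(−σ_θ²/(2σ²)). -/
/-!
For Owen's function `T(h, a) = (2π)⁻¹ ∫₀ᵃ e^{-h²(1+t²)/2}/(1+t²) dt` one has
`(1 - Q x) Q x = 2 T(x, 1)`, since both sides have the same derivative and agree at `0`. Bounding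
`e^{-x²(1+t²)/2}` by its values at `t = 0` and `t = 1` gives
`e^{-x²}/4 ≤ (1 - Q x) Q x ≤ e^{-x²/2}/4`. Hence, in the variable `x = (θ - μθ)/σ`, the integrand
lies between `4 e^{-x²/2}` and `4`, so it is integrable, and Jensen's inequality for `exp` gives
`∫ e^{-x²/2} dπ ≥ e^{-∫ x² dπ / 2} = e^{-σθ²/(2σ²)}`.
-/

open MeasureTheory

noncomputable section

namespace GaussianTail

open Real Set intervalIntegral

def gaussTail (x : ℝ) : ℝ := (√(2 * π))⁻¹ * ∫ t in Ioi x, exp (-t ^ 2 / 2)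

def owenT (h a : ℝ) : ℝ :=
  (2 * π)⁻¹ * ∫ t in 0..a, exp (-h ^ 2 * (1 + t ^ 2) / 2) / (1 + t ^ 2)

lemma exp_neg_sq_div_two_eq :
    (fun t : ℝ => exp (-t ^ 2 / 2)) = fun t => exp (-(1 / 2) * t ^ 2) := by
  ext t; ring_nf

lemma integrable_exp_neg_sq_div_two : Integrable fun t : ℝ => exp (-t ^ 2 / 2) := by
  rw [exp_neg_sq_div_two_eq]; exact integrable_exp_neg_mul_sq (by norm_num)

lemma integral_Ioi_exp_neg_sq_div_two (x : ℝ) :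
    ∫ t in Ioi x, exp (-t ^ 2 / 2) = √(2 * π) / 2 - ∫ t in 0..x, exp (-t ^ 2 / 2) := by
  have hhalf : ∫ t in Ioi (0 : ℝ), exp (-t ^ 2 / 2) = √(2 * π) / 2 := by
    rw [exp_neg_sq_div_two_eq, integral_gaussian_Ioi]; norm_num [div_div_eq_mul_div, mul_comm]
  rw [← hhalf, ← integral_Ioi_sub_Ioi' integrable_exp_neg_sq_div_two.integrableOn
    integrable_exp_neg_sq_div_two.integrableOn, sub_sub_cancel]

lemma gaussTail_eq (x : ℝ) :
    gaussTail x = 1 / 2 - (√(2 * π))⁻¹ * ∫ t in 0..x, exp (-t ^ 2 / 2) := by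
  have : √(2 * π) ≠ 0 := by positivity
  rw [gaussTail, integral_Ioi_exp_neg_sq_div_two]
  field_simp

lemma hasDerivAt_integral_exp_neg_sq_div_two (x : ℝ) :
    HasDerivAt (fun x => ∫ t in 0..x, exp (-t ^ 2 / 2)) (exp (-x ^ 2 / 2)) x :=
  integral_hasDerivAt_right integrable_exp_neg_sq_div_two.intervalIntegrable
    ((by fun_prop : Continuous fun t : ℝ => exp (-t ^ 2 / 2)).stronglyMeasurableAtFilter _ _)
    (by fun_prop)

lemma hasDerivAt_gaussTail (x : ℝ) :
    HasDerivAt gaussTail (-((√(2 * π))⁻¹ * exp (-x ^ 2 / 2))) x := by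
  rw [funext gaussTail_eq]
  exact ((hasDerivAt_integral_exp_neg_sq_div_two x).const_mul _).const_sub _

lemma continuous_gaussTail : Continuous gaussTail :=
  continuous_iff_continuousAt.2 fun x => (hasDerivAt_gaussTail x).continuousAt

lemma integral_div_one_add_sq (c a : ℝ) : ∫ t in 0..a, c / (1 + t ^ 2) = c * arctan a := by
  simp only [div_eq_mul_inv, intervalIntegral.integral_const_mul, integral_inv_one_add_sq,
    arctan_zero, sub_zero]

lemma owenT_zero_left (a : ℝ) : owenT 0 a = arctan a / (2 * π) := by
  norm_num [owenT, integral_div_one_add_sq]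
  ring

lemma continuous_exp_div_one_add_sq {g : ℝ → ℝ} (hg : Continuous g) :
    Continuous fun t => exp (g t) / (1 + t ^ 2) :=
  Continuous.div (by fun_prop) (by fun_prop) fun t => by positivity

lemma hasDerivAt_owenT (h a : ℝ) :
    HasDerivAt (fun h => owenT h a)
      (-((2 * π)⁻¹ * exp (-h ^ 2 / 2) * ∫ s in 0..a * h, exp (-s ^ 2 / 2))) h := by
  set F : ℝ → ℝ → ℝ := fun y t => exp (-y ^ 2 * (1 + t ^ 2) / 2) / (1 + t ^ 2)
  set F' : ℝ → ℝ → ℝ := fun y t => -y * exp (-y ^ 2 * (1 + t ^ 2) / 2)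
  have hF : ∀ y, Continuous (F y) := fun y => continuous_exp_div_one_add_sq (by fun_prop)
  have hF' : ∀ y t, HasDerivAt (fun y => F y t) (F' y t) y := by
    intro y t
    have := (((hasDerivAt_pow 2 y).neg.mul_const (1 + t ^ 2)).div_const 2).exp.div_const (1 + t ^ 2)
    refine this.congr_deriv ?_
    simp only [F', Pi.neg_apply]
    field_simp
    ring
  have hbound : ∀ t, ∀ y ∈ Metric.ball h 1, ‖F' y t‖ ≤ |h| + 1 := by
    intro t y hy
    have hy : |y| ≤ |h| + 1 := by
      have := abs_sub_abs_le_abs_sub y h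
      rw [Metric.mem_ball, Real.dist_eq] at hy
      linarith
    have hexp : exp (-y ^ 2 * (1 + t ^ 2) / 2) ≤ 1 := exp_le_one_iff.2 (by
      have : 0 ≤ y ^ 2 * (1 + t ^ 2) := by positivity
      linarith)
    rw [norm_mul, norm_neg, Real.norm_eq_abs, Real.norm_of_nonneg (exp_pos _).le]
    nlinarith [abs_nonneg y]
  have hint := (intervalIntegral.hasDerivAt_integral_of_dominated_loc_of_deriv_le
    (μ := volume) (Metric.ball_mem_nhds h one_pos)
    (.of_forall fun y => (hF y).aestronglyMeasurable)
    ((hF h).intervalIntegrable 0 a)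
    (by fun_prop : Continuous (F' h)).aestronglyMeasurable
    (.of_forall fun t _ => hbound t) intervalIntegrable_const
    (.of_forall fun t _ y _ => hF' y t)).2
  have hsubst :
      ∫ t in 0..a, F' h t = -(exp (-h ^ 2 / 2) * ∫ s in 0..a * h, exp (-s ^ 2 / 2)) := by
    have hsplit : ∀ t, F' h t = -exp (-h ^ 2 / 2) * (h * exp (-(h * t) ^ 2 / 2)) := by
      intro t
      simp only [F']
      rw [show -h ^ 2 * (1 + t ^ 2) / 2 = -h ^ 2 / 2 + -(h * t) ^ 2 / 2 by ring, exp_add]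
      ring
    simp only [hsplit, intervalIntegral.integral_const_mul]
    rw [← smul_eq_mul h, smul_integral_comp_mul_left (fun s => exp (-s ^ 2 / 2)) h, mul_zero,
      mul_comm h a]
    ring
  have := hint.const_mul (2 * π)⁻¹
  rw [hsubst] at this
  exact this.congr_deriv (by ring)

lemma one_sub_gaussTail_mul_gaussTail (x : ℝ) :
    (1 - gaussTail x) * gaussTail x = 2 * owenT x 1 := by
  have hinv : (2 * π)⁻¹ = (√(2 * π))⁻¹ ^ 2 := by rw [inv_pow, sq_sqrt (by positivity)]
  have hderiv :
      ∀ y, HasDerivAt (fun y => (1 - gaussTail y) * gaussTail y - 2 * owenT y 1) 0 y := by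
    intro y
    refine ((((hasDerivAt_gaussTail y).const_sub 1).mul (hasDerivAt_gaussTail y)).sub
      ((hasDerivAt_owenT y 1).const_mul 2)).congr_deriv ?_
    rw [one_mul, gaussTail_eq, hinv]
    ring
  have hconst := is_const_of_deriv_eq_zero (fun y => (hderiv y).differentiableAt)
    (fun y => (hderiv y).deriv) x 0
  have hzero : (1 - gaussTail 0) * gaussTail 0 - 2 * owenT 0 1 = 0 := by
    rw [gaussTail_eq, owenT_zero_left, arctan_one, integral_same]
    field_simp
    ring
  linarith

lemma owenT_le (h : ℝ) {a : ℝ} (ha : 0 ≤ a) :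
    owenT h a ≤ arctan a / (2 * π) * exp (-h ^ 2 / 2) := by
  have hmono : ∫ t in 0..a, exp (-h ^ 2 * (1 + t ^ 2) / 2) / (1 + t ^ 2)
      ≤ ∫ t in 0..a, exp (-h ^ 2 / 2) / (1 + t ^ 2) := by
    refine integral_mono_on ha
      ((continuous_exp_div_one_add_sq (by fun_prop)).intervalIntegrable _ _)
      ((continuous_exp_div_one_add_sq continuous_const).intervalIntegrable _ _) fun t _ => ?_
    gcongr ?_ / _
    exact exp_le_exp.2 (by nlinarith [sq_nonneg (h * t)])
  rw [integral_div_one_add_sq] at hmono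
  rw [owenT]
  calc (2 * π)⁻¹ * _ ≤ (2 * π)⁻¹ * (exp (-h ^ 2 / 2) * arctan a) := by gcongr
    _ = _ := by ring

lemma le_owenT (h : ℝ) {a : ℝ} (ha : 0 ≤ a) :
    arctan a / (2 * π) * exp (-h ^ 2 * (1 + a ^ 2) / 2) ≤ owenT h a := by
  have hmono : ∫ t in 0..a, exp (-h ^ 2 * (1 + a ^ 2) / 2) / (1 + t ^ 2)
      ≤ ∫ t in 0..a, exp (-h ^ 2 * (1 + t ^ 2) / 2) / (1 + t ^ 2) := by
    refine integral_mono_on ha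
      ((continuous_exp_div_one_add_sq continuous_const).intervalIntegrable _ _)
      ((continuous_exp_div_one_add_sq (by fun_prop)).intervalIntegrable _ _) fun t ht => ?_
    have hta : t ^ 2 ≤ a ^ 2 := pow_le_pow_left₀ ht.1 ht.2 2
    gcongr ?_ / _
    exact exp_le_exp.2 (by nlinarith [mul_le_mul_of_nonneg_left hta (sq_nonneg h)])
  rw [integral_div_one_add_sq] at hmono
  rw [owenT]
  calc _ = (2 * π)⁻¹ * (exp (-h ^ 2 * (1 + a ^ 2) / 2) * arctan a) := by ring
    _ ≤ _ := by gcongr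

lemma one_sub_gaussTail_mul_gaussTail_le (x : ℝ) :
    (1 - gaussTail x) * gaussTail x ≤ exp (-x ^ 2 / 2) / 4 := by
  have hT := owenT_le x zero_le_one
  rw [arctan_one] at hT
  rw [one_sub_gaussTail_mul_gaussTail]
  calc 2 * owenT x 1 ≤ 2 * (π / 4 / (2 * π) * exp (-x ^ 2 / 2)) := by gcongr
    _ = exp (-x ^ 2 / 2) / 4 := by field_simp

lemma le_one_sub_gaussTail_mul_gaussTail (x : ℝ) :
    exp (-x ^ 2) / 4 ≤ (1 - gaussTail x) * gaussTail x := by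
  have hT := le_owenT x zero_le_one
  rw [arctan_one, show -x ^ 2 * (1 + 1 ^ 2) / 2 = -x ^ 2 by ring] at hT
  rw [one_sub_gaussTail_mul_gaussTail]
  calc exp (-x ^ 2) / 4 = 2 * (π / 4 / (2 * π) * exp (-x ^ 2)) := by field_simp
    _ ≤ 2 * owenT x 1 := by gcongr

lemma one_sub_gaussTail_mul_gaussTail_pos (x : ℝ) : 0 < (1 - gaussTail x) * gaussTail x :=
  lt_of_lt_of_le (by positivity) (le_one_sub_gaussTail_mul_gaussTail x)

def fisherWeight (x : ℝ) : ℝ := exp (-x ^ 2) / ((1 - gaussTail x) * gaussTail x)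

lemma four_mul_exp_neg_sq_div_two_le_fisherWeight (x : ℝ) :
    4 * exp (-x ^ 2 / 2) ≤ fisherWeight x := by
  rw [fisherWeight, le_div_iff₀ (one_sub_gaussTail_mul_gaussTail_pos x)]
  calc 4 * exp (-x ^ 2 / 2) * ((1 - gaussTail x) * gaussTail x)
      ≤ 4 * exp (-x ^ 2 / 2) * (exp (-x ^ 2 / 2) / 4) := by
        gcongr; exact one_sub_gaussTail_mul_gaussTail_le x
    _ = exp (-x ^ 2 / 2 + -x ^ 2 / 2) := by rw [exp_add]; ring
    _ = exp (-x ^ 2) := by ring_nf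

lemma fisherWeight_le_four (x : ℝ) : fisherWeight x ≤ 4 := by
  rw [fisherWeight, div_le_iff₀ (one_sub_gaussTail_mul_gaussTail_pos x)]
  linarith [le_one_sub_gaussTail_mul_gaussTail x]

lemma continuous_fisherWeight : Continuous fisherWeight :=
  (continuous_exp.comp (continuous_pow 2).neg).div
    ((continuous_const.sub continuous_gaussTail).mul continuous_gaussTail)
    fun x => (one_sub_gaussTail_mul_gaussTail_pos x).ne'

end GaussianTail

section

variable {α : Type*} [MeasurableSpace α] {μ : Measure α} [IsProbabilityMeasure μ] {f : α → ℝ}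

open Real

lemma exp_integral_le_integral_exp (hf : Integrable f μ)
    (hexp : Integrable (fun x => exp (f x)) μ) :
    exp (∫ x, f x ∂μ) ≤ ∫ x, exp (f x) ∂μ :=
  convexOn_exp.map_integral_le continuous_exp.continuousOn isClosed_univ
    (.of_forall fun _ => Set.mem_univ _) hf hexp

open GaussianTail in
lemma four_mul_exp_neg_integral_sq_div_two_le_integral_fisherWeight (hf : MemLp f 2 μ) :
    4 * exp (-(∫ x, f x ^ 2 ∂μ) / 2) ≤ ∫ x, fisherWeight (f x) ∂μ := by
  have hmeas := hf.aestronglyMeasurable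
  have hweight : Integrable (fun x => fisherWeight (f x)) μ :=
    .of_bound (continuous_fisherWeight.comp_aestronglyMeasurable hmeas) 4 (.of_forall fun x => by
      rw [Real.norm_of_nonneg ((by positivity : (0:ℝ) ≤ 4 * exp _).trans
        (four_mul_exp_neg_sq_div_two_le_fisherWeight _))]
      exact fisherWeight_le_four _)
  have hexp : Integrable (fun x => exp (-f x ^ 2 / 2)) μ :=
    .of_bound ((by fun_prop : Continuous fun y : ℝ => exp (-y ^ 2 / 2)).comp_aestronglyMeasurable
      hmeas) 1 (.of_forall fun x => by
        rw [Real.norm_of_nonneg (exp_pos _).le, exp_le_one_iff]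
        have := sq_nonneg (f x)
        linarith)
  have hjensen := exp_integral_le_integral_exp (f := fun x => -f x ^ 2 / 2)
    (hf.integrable_sq.neg.div_const 2) hexp
  rw [integral_div, integral_neg] at hjensen
  calc 4 * exp (-(∫ x, f x ^ 2 ∂μ) / 2) ≤ 4 * ∫ x, exp (-f x ^ 2 / 2) ∂μ := by gcongr
    _ = ∫ x, 4 * exp (-f x ^ 2 / 2) ∂μ := (integral_const_mul _ _).symm
    _ ≤ ∫ x, fisherWeight (f x) ∂μ :=
      integral_mono (hexp.const_mul 4) hweight fun _ => four_mul_exp_neg_sq_div_two_le_fisherWeight _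

end

theorem threshold_quantizer_fisher_information_lower_bound_general
    (σ μθ σθ : ℝ)
    (Q : ℝ → ℝ)
    (hQ : ∀ x, Q x = (1 / Real.sqrt (2 * Real.pi)) * ∫ t in Set.Ioi x, Real.exp (-t ^ 2 / 2))
    (π : Measure ℝ) [IsProbabilityMeasure π]
    (hvar_int : Integrable (fun θ : ℝ => (θ - μθ) ^ 2) π)
    (hvar : ∫ θ, (θ - μθ) ^ 2 ∂π = σθ ^ 2) :
    (1 / (2 * Real.pi * σ ^ 2)) *
        (∫ θ, Real.exp (-(θ - μθ) ^ 2 / σ ^ 2)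
          / ((1 - Q ((θ - μθ) / σ)) * Q ((θ - μθ) / σ)) ∂π)
      ≥ (2 / (Real.pi * σ ^ 2)) * Real.exp (-σθ ^ 2 / (2 * σ ^ 2)) := by
  obtain rfl : Q = GaussianTail.gaussTail :=
    funext fun x => by rw [hQ, GaussianTail.gaussTail, one_div]
  have hintegrand : ∀ θ, Real.exp (-(θ - μθ) ^ 2 / σ ^ 2)
      / ((1 - GaussianTail.gaussTail ((θ - μθ) / σ)) * GaussianTail.gaussTail ((θ - μθ) / σ))
      = GaussianTail.fisherWeight ((θ - μθ) / σ) := by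
    intro θ
    rw [GaussianTail.fisherWeight, div_pow, neg_div]
  have hstd : MemLp (fun θ => (θ - μθ) / σ) 2 π :=
    (memLp_two_iff_integrable_sq (by fun_prop)).2
      (by simpa only [div_pow] using hvar_int.div_const (σ ^ 2))
  have hstd_var : ∫ θ, ((θ - μθ) / σ) ^ 2 ∂π = σθ ^ 2 / σ ^ 2 := by
    simp only [div_pow]
    rw [integral_div, hvar]
  have key := four_mul_exp_neg_integral_sq_div_two_le_integral_fisherWeight hstd
  rw [hstd_var, show -(σθ ^ 2 / σ ^ 2) / 2 = -σθ ^ 2 / (2 * σ ^ 2) by ring] at key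
  simp only [hintegrand, ge_iff_le]
  calc 2 / (Real.pi * σ ^ 2) * Real.exp (-σθ ^ 2 / (2 * σ ^ 2))
      = 1 / (2 * Real.pi * σ ^ 2) * (4 * Real.exp (-σθ ^ 2 / (2 * σ ^ 2))) := by ring
    _ ≤ _ := by gcongr

/-- For the Gaussian tail function `Q`, `σ > 0`, and a prior `π` with
mean `μθ` and variance `σθ²`, the posterior Fisher information of the binary
threshold quantizer with threshold `μθ`,
`(1/(2πσ²)) ∫ e^{−(θ−μθ)²/σ²}/((1−Q((θ−μθ)/σ)) Q((θ−μθ)/σ)) dπ(θ)`, is at least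
`(2/(πσ²)) e^{−σθ²/(2σ²)}`. -/
theorem threshold_quantizer_fisher_information_lower_bound
    (σ μθ σθ : ℝ) (hσ : 0 < σ)
    (Q : ℝ → ℝ)
    (hQ : ∀ x, Q x = (1 / Real.sqrt (2 * Real.pi)) * ∫ t in Set.Ioi x, Real.exp (-t ^ 2 / 2))
    (π : Measure ℝ) [IsProbabilityMeasure π]
    (hmean_int : Integrable (fun θ : ℝ => θ) π)
    (hmean : ∫ θ, θ ∂π = μθ)
    (hvar_int : Integrable (fun θ : ℝ => (θ - μθ) ^ 2) π)
    (hvar : ∫ θ, (θ - μθ) ^ 2 ∂π = σθ ^ 2) :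
    (1 / (2 * Real.pi * σ ^ 2)) *
        (∫ θ, Real.exp (-(θ - μθ) ^ 2 / σ ^ 2)
          / ((1 - Q ((θ - μθ) / σ)) * Q ((θ - μθ) / σ)) ∂π)
      ≥ (2 / (Real.pi * σ ^ 2)) * Real.exp (-σθ ^ 2 / (2 * σ ^ 2)) :=
  threshold_quantizer_fisher_information_lower_bound_general σ μθ σθ Q hQ π hvar_int hvar
end
end

section
/- Let θ_min < θ_max be reals, let c > 0, and let g : [θ_min, θ_max] → ℝ be continuous, differentiable on (θ_min, θ_max), with g(θ_min) = 0, g(θ_max) = 1, 0 < g(θ) < 1 and g′(θ) > 0 on (θ_min, θ_max), and suppose g′(θ)² / (g(θ)(1 − g(θ))) = c² for all θ ∈ (θ_min, θ_max). Then c = π/(θ_max − θ_min) and g(θ) = (1/2)·[1 + sin(π((θ − θ_min)/(θ_max − θ_min) − 1/2))] for all θ ∈ [θ_min, θ_max]. -/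
/-!
Substituting `g = (1 + sin φ) / 2` turns the equation `g′² = c² g (1 − g)` with `g′ > 0` into
`φ′ = c`, i.e. `φ = arcsin (2g − 1)` is affine with slope `c`. The boundary values
`φ(θmin) = −π/2` and `φ(θmax) = π/2` then force `c (θmax − θmin) = π`.
-/

open Real Set

theorem div_sqrt_eq_of_sq_div_eq {d y c : ℝ} (hd : 0 ≤ d) (hy : 0 ≤ y) (hc : 0 ≤ c)
    (h : d ^ 2 / y = c ^ 2) : d / √y = c := by
  rw [← sq_eq_sq₀ (div_nonneg hd (sqrt_nonneg y)) hc, div_pow, sq_sqrt hy, h]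

theorem hasDerivAt_arcsin_two_mul_sub_one {g : ℝ → ℝ} {g' x : ℝ} (hg : HasDerivAt g g' x)
    (h0 : 0 < g x) (h1 : g x < 1) :
    HasDerivAt (fun t => arcsin (2 * g t - 1)) (g' / √(g x * (1 - g x))) x := by
  have hinner : HasDerivAt (fun t => 2 * g t - 1) (2 * g') x := (hg.const_mul 2).sub_const 1
  have hsq : 1 - (2 * g x - 1) ^ 2 = 2 ^ 2 * (g x * (1 - g x)) := by ring
  have h := (hasDerivAt_arcsin (by linarith) (by linarith)).comp x hinner
  rw [hsq, sqrt_mul (by norm_num), sqrt_sq (by norm_num)] at h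
  have hval : g' / √(g x * (1 - g x)) = 1 / (2 * √(g x * (1 - g x))) * (2 * g') := by
    field_simp
  rw [hval]
  exact h

theorem eq_add_mul_sub_of_hasDerivAt_const {f : ℝ → ℝ} {a b c : ℝ}
    (hf : ContinuousOn f (Icc a b)) (hderiv : ∀ x ∈ Ioo a b, HasDerivAt f c x) :
    ∀ x ∈ Icc a b, f x = f a + c * (x - a) := by
  rintro x ⟨hax, hxb⟩
  rcases hax.eq_or_lt with rfl | hax
  · simp
  obtain ⟨-, -, hslope⟩ := exists_hasDerivAt_eq_slope f (fun _ => c) hax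
    (hf.mono (Icc_subset_Icc_right hxb))
    (fun y hy => hderiv y ⟨hy.1, hy.2.trans_le hxb⟩)
  rw [hslope]
  field_simp [(sub_pos.mpr hax).ne']
  ring

/-- If `g` is continuous on `[θmin, θmax]`, differentiable on the
open interval, satisfies the boundary conditions `g(θmin) = 0`, `g(θmax) = 1`,
`0 < g < 1` and `g′ > 0` inside, and the constant-Fisher-information equation
`g′(θ)²/(g(θ)(1−g(θ))) = c²` with `c > 0`, then `c = π/(θmax − θmin)` and
`g(θ) = (1/2)[1 + sin(π((θ − θmin)/(θmax − θmin) − 1/2))]` on `[θmin, θmax]`. -/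
theorem least_favorable_prior_sine_solution
    (θmin θmax c : ℝ) (hlt : θmin < θmax) (hc : 0 < c)
    (g : ℝ → ℝ)
    (hcont : ContinuousOn g (Set.Icc θmin θmax))
    (hdiff : ∀ θ ∈ Set.Ioo θmin θmax, DifferentiableAt ℝ g θ)
    (h0 : g θmin = 0) (h1 : g θmax = 1)
    (hbd : ∀ θ ∈ Set.Ioo θmin θmax, 0 < g θ ∧ g θ < 1)
    (hpos : ∀ θ ∈ Set.Ioo θmin θmax, 0 < deriv g θ)
    (hODE : ∀ θ ∈ Set.Ioo θmin θmax, (deriv g θ) ^ 2 / (g θ * (1 - g θ)) = c ^ 2) :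
    c = Real.pi / (θmax - θmin) ∧
      ∀ θ ∈ Set.Icc θmin θmax,
        g θ = (1 / 2) *
          (1 + Real.sin (Real.pi * ((θ - θmin) / (θmax - θmin) - 1 / 2))) := by
  have hphi_deriv : ∀ θ ∈ Ioo θmin θmax, HasDerivAt (fun t => arcsin (2 * g t - 1)) c θ := by
    intro θ hθ
    obtain ⟨hg0, hg1⟩ := hbd θ hθ
    convert hasDerivAt_arcsin_two_mul_sub_one (hdiff θ hθ).hasDerivAt hg0 hg1 using 1
    exact (div_sqrt_eq_of_sq_div_eq (hpos θ hθ).le (by nlinarith) hc.le (hODE θ hθ)).symm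
  have hphi := eq_add_mul_sub_of_hasDerivAt_const (f := fun t => arcsin (2 * g t - 1))
    (continuous_arcsin.comp_continuousOn ((continuousOn_const.mul hcont).sub continuousOn_const))
    hphi_deriv
  have hphi_min : arcsin (2 * g θmin - 1) = -(π / 2) := by norm_num [h0]
  have hphi_max : arcsin (2 * g θmax - 1) = π / 2 := by norm_num [h1]
  simp only [hphi_min] at hphi
  have hcval : c = π / (θmax - θmin) := by
    have := hphi θmax (right_mem_Icc.mpr hlt.le)
    rw [hphi_max] at this
    field_simp [(sub_pos.mpr hlt).ne']
    linarith
  refine ⟨hcval, fun θ hθ => ?_⟩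
  have hg_mem : g θ ∈ Icc 0 1 := by
    rcases hθ.1.eq_or_lt with rfl | hl
    · simp [h0]
    rcases hθ.2.eq_or_lt with rfl | hr
    · simp [h1]
    exact ⟨(hbd θ ⟨hl, hr⟩).1.le, (hbd θ ⟨hl, hr⟩).2.le⟩
  have hsin := sin_arcsin (x := 2 * g θ - 1) (by linarith [hg_mem.1]) (by linarith [hg_mem.2])
  rw [hphi θ hθ, hcval] at hsin
  have harg : -(π / 2) + π / (θmax - θmin) * (θ - θmin)
      = π * ((θ - θmin) / (θmax - θmin) - 1 / 2) := by
    field_simp [(sub_pos.mpr hlt).ne']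
    ring
  rw [harg] at hsin
  linarith
end

section
/- Let g*(θ) = (1/2)·[1 + sin(πθ/2)] for θ ∈ [−1, 1]. Then for every θ ∈ (−1, 1), g*′(θ)² / (g*(θ)(1 − g*(θ))) = π²/4. Consequently, for a network of N sensors whose binary quantizer outputs have response probability g*(θ) and conditionally independent outputs, the data contribution to the Fisher information equals N·π²/4, and the corresponding Cramér–Rao lower bound is 4/(N·π²). -/
/-!
For `g = (1 + sin (ω θ)) / 2` one has `g (1 - g) = cos² (ω θ) / 4` and `g' = ω cos (ω θ) / 2`, so the
cosines cancel in the Fisher information `g'² / (g (1 - g))` wherever `cos (ω θ) ≠ 0`, leaving `ω²`;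
here `ω = π / 2`, and on `(-1, 1)` the cosine is positive.
-/

open Real

noncomputable def bernoulliFisherInfo (g : ℝ → ℝ) (θ : ℝ) : ℝ :=
  deriv g θ ^ 2 / (g θ * (1 - g θ))

lemma hasDerivAt_sine_response (ω θ : ℝ) :
    HasDerivAt (fun x => (1 + sin (ω * x)) / 2) (ω * cos (ω * θ) / 2) θ := by
  have h := ((hasDerivAt_id θ).const_mul ω).sin.const_add 1 |>.div_const 2
  simpa [mul_comm] using h

lemma sine_response_variance (x : ℝ) :
    (1 + sin x) / 2 * (1 - (1 + sin x) / 2) = cos x ^ 2 / 4 := by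
  linear_combination -(sin_sq_add_cos_sq x) / 4

theorem bernoulliFisherInfo_sine_response {ω θ : ℝ} (hcos : cos (ω * θ) ≠ 0) :
    bernoulliFisherInfo (fun x => (1 + sin (ω * x)) / 2) θ = ω ^ 2 := by
  rw [bernoulliFisherInfo, (hasDerivAt_sine_response ω θ).deriv, sine_response_variance]
  field_simp
  ring

lemma cos_pi_div_two_mul_pos {θ : ℝ} (hθ : θ ∈ Set.Ioo (-1 : ℝ) 1) :
    0 < cos (π / 2 * θ) := by
  obtain ⟨hlo, hhi⟩ := hθ
  apply cos_pos_of_mem_Ioo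
  constructor <;> nlinarith [pi_pos]

/-- For the sine response function `g*(θ) = (1/2)(1 + sin(πθ/2))`, on
`(−1, 1)` the per-sensor Fisher information `g*′(θ)²/(g*(θ)(1−g*(θ)))` equals
`π²/4`; consequently, for `N` sensors with conditionally independent binary
outputs of response probability `g*`, the data Fisher information equals `Nπ²/4`
and the corresponding Cramér–Rao lower bound is `4/(Nπ²)`. -/
theorem sine_quantizer_performance_limit
    (g : ℝ → ℝ)
    (hg : ∀ θ, g θ = (1 / 2) * (1 + Real.sin (Real.pi * θ / 2))) :
    (∀ θ ∈ Set.Ioo (-1 : ℝ) 1,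
        (deriv g θ) ^ 2 / (g θ * (1 - g θ)) = Real.pi ^ 2 / 4) ∧
      ∀ N : ℕ, ∀ θ ∈ Set.Ioo (-1 : ℝ) 1,
        (N : ℝ) * ((deriv g θ) ^ 2 / (g θ * (1 - g θ))) = (N : ℝ) * Real.pi ^ 2 / 4 ∧
          1 / ((N : ℝ) * ((deriv g θ) ^ 2 / (g θ * (1 - g θ))))
            = 4 / ((N : ℝ) * Real.pi ^ 2) := by
  have hg' : g = fun x => (1 + sin (π / 2 * x)) / 2 := by
    funext x
    rw [hg]
    ring_nf
  have hinfo : ∀ θ ∈ Set.Ioo (-1 : ℝ) 1, bernoulliFisherInfo g θ = π ^ 2 / 4 := by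
    intro θ hθ
    rw [hg', bernoulliFisherInfo_sine_response (cos_pi_div_two_mul_pos hθ).ne']
    ring
  refine ⟨hinfo, fun N θ hθ => ?_⟩
  change (N : ℝ) * bernoulliFisherInfo g θ = _ ∧ 1 / ((N : ℝ) * bernoulliFisherInfo g θ) = _
  rw [hinfo θ hθ, ← mul_div_assoc, one_div_div]
  exact ⟨rfl, rfl⟩
end

section
/- Let Θ, Λ, 𝒳, 𝒵 be measurable spaces with σ-finite measures, and suppose the joint density of (θ, λ, X, Z) factorizes as p_Θ(θ)·p_Λ(λ|θ)·p_X(x|λ)·p_Z(z|λ), so that X and Z are conditionally independent given the hidden variable λ (hierarchical conditional independence) while possibly dependent given θ alone. Let D be a positive integer and F : {1,…,D} × 𝒵 × Θ → ℝ a cost function with all integrals below finite. For a measurable quantizer δ : 𝒳 → {1,…,D} define J(δ) = E[F(δ(X), Z, θ)], and define a(θ, λ, d) = E[F(d, Z, θ) | θ, λ] = ∫ F(d, z, θ) p_Z(z|λ) dν_Z(z). Then δ* minimizes J over all measurable quantizers if and only if, for almost every x with respect to the marginal distribution of X, δ*(x) minimizes d ↦ ∫∫ a(θ, λ, d)·p_Θ(θ)·p_Λ(λ|θ)·p_X(x|λ)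 dν_Θ(θ) dν_Λ(λ) over d ∈ {1,…,D}. -/
open MeasureTheory

section QuantHelpers

variable {α β γ ζ : Type*} [MeasurableSpace α] [MeasurableSpace β] [MeasurableSpace γ]
  [MeasurableSpace ζ]

private lemma quant_integrable_of_integral_eq_one {μ : Measure α} {f : α → ℝ}
    (h : ∫ x, f x ∂μ = 1) : Integrable f μ := by
  by_contra hc
  rw [integral_undef hc] at h
  exact one_ne_zero h.symm

/-- The shuffle `(a, (b, c)) ↦ (b, (a, c))` as a measurable equivalence. -/
private def quantShuffle (α β γ : Type*) [MeasurableSpace α] [MeasurableSpace β]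
    [MeasurableSpace γ] : α × β × γ ≃ᵐ β × α × γ :=
  MeasurableEquiv.prodAssoc.symm.trans
    (((MeasurableEquiv.prodComm (α := α) (β := β)).prodCongr (MeasurableEquiv.refl γ)).trans
      MeasurableEquiv.prodAssoc)

private lemma quantShuffle_measurePreserving (μ : Measure α) (ν : Measure β) (ρ : Measure γ)
    [SigmaFinite μ] [SigmaFinite ν] [SigmaFinite ρ] :
    MeasurePreserving (quantShuffle α β γ) (μ.prod (ν.prod ρ)) (ν.prod (μ.prod ρ)) := by
  have h1 : MeasurePreserving (⇑(MeasurableEquiv.prodAssoc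
      (α := α) (β := β) (γ := γ)).symm) (μ.prod (ν.prod ρ)) ((μ.prod ν).prod ρ) :=
    MeasurePreserving.symm _ (measurePreserving_prodAssoc μ ν ρ)
  have h2 : MeasurePreserving (Prod.map (Prod.swap : α × β → β × α) (id : γ → γ))
      ((μ.prod ν).prod ρ) ((ν.prod μ).prod ρ) :=
    MeasureTheory.Measure.measurePreserving_swap.prod (MeasurePreserving.id ρ)
  have h3 := measurePreserving_prodAssoc ν μ ρ
  have h := (h3.comp h2).comp h1
  have hfun : ⇑(quantShuffle α β γ) =
      (⇑(MeasurableEquiv.prodAssoc (α := β) (β := α) (γ := γ)) ∘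
          Prod.map (Prod.swap : α × β → β × α) (id : γ → γ)) ∘
        ⇑(MeasurableEquiv.prodAssoc (α := α) (β := β) (γ := γ)).symm := by
    funext ⟨x, y, z⟩
    rfl
  rw [hfun]
  exact h

private lemma quant_integral_triple (μ : Measure α) (ν : Measure β) (ρ : Measure γ)
    [SigmaFinite μ] [SigmaFinite ν] [SigmaFinite ρ]
    {f : α × β × γ → ℝ} (hf : Integrable f (μ.prod (ν.prod ρ))) :
    ∫ q, f q ∂(μ.prod (ν.prod ρ)) = ∫ x, ∫ y, ∫ z, f (x, (y, z)) ∂ρ ∂ν ∂μ := by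
  rw [integral_prod _ hf]
  refine integral_congr_ae ?_
  filter_upwards [hf.prod_right_ae] with x hx
  exact integral_prod _ hx

private lemma quant_integral_quad (μ : Measure α) (ν : Measure β) (ρ : Measure γ)
    (σ : Measure ζ) [SigmaFinite μ] [SigmaFinite ν] [SigmaFinite ρ] [SigmaFinite σ]
    {f : α × β × γ × ζ → ℝ} (hf : Integrable f (μ.prod (ν.prod (ρ.prod σ)))) :
    ∫ q, f q ∂(μ.prod (ν.prod (ρ.prod σ))) =
      ∫ x, ∫ y, ∫ z, ∫ t, f (x, (y, (z, t))) ∂σ ∂ρ ∂ν ∂μ := by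
  rw [integral_prod _ hf]
  refine integral_congr_ae ?_
  filter_upwards [hf.prod_right_ae] with x hx
  exact quant_integral_triple ν ρ σ hx

end QuantHelpers

/-- Under the hierarchical conditional independence model with joint
density `pΘ(θ) pΛ(λ|θ) pX(x|λ) pZ(z|λ)` (so `X` and `Z` are conditionally
independent given the hidden variable `λ`, though possibly dependent given `θ`),
a measurable quantizer `δ*` minimizes `J(δ) = E[F(δ(X), Z, θ)]` if and only if,
for a.e. `x` w.r.t. the marginal distribution of `X`, `δ*(x)` minimizes
`d ↦ ∫∫ a(θ,λ,d) pΘ(θ) pΛ(λ|θ) pX(x|λ) dνΘ dνΛ`, where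
`a(θ,λ,d) = ∫ F(d,z,θ) pZ(z|λ) dνZ(z)`. -/
theorem optimal_quantizer_hierarchical_conditional_independence
    {Θ Λ 𝒳 𝒵 : Type*}
    [MeasurableSpace Θ] [MeasurableSpace Λ] [MeasurableSpace 𝒳] [MeasurableSpace 𝒵]
    (νΘ : Measure Θ) (νΛ : Measure Λ) (νX : Measure 𝒳) (νZ : Measure 𝒵)
    [SigmaFinite νΘ] [SigmaFinite νΛ] [SigmaFinite νX] [SigmaFinite νZ]
    -- prior density of θ and conditional density of the hidden variable λ given θ
    (pΘ : Θ → ℝ) (hpΘ_nn : ∀ θ, 0 ≤ pΘ θ) (hpΘ_meas : Measurable pΘ)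
    (hpΘ_prob : ∫ θ, pΘ θ ∂νΘ = 1)
    (pΛ : Θ → Λ → ℝ) (hpΛ_nn : ∀ θ l, 0 ≤ pΛ θ l)
    (hpΛ_meas : Measurable fun q : Θ × Λ => pΛ q.1 q.2)
    (hpΛ_prob : ∀ θ, ∫ l, pΛ θ l ∂νΛ = 1)
    -- conditional densities of X and Z given λ (conditional independence given λ)
    (pX : Λ → 𝒳 → ℝ) (hpX_nn : ∀ l x, 0 ≤ pX l x)
    (hpX_meas : Measurable fun q : Λ × 𝒳 => pX q.1 q.2)
    (hpX_prob : ∀ l, ∫ x, pX l x ∂νX = 1)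
    (pZ : Λ → 𝒵 → ℝ) (hpZ_nn : ∀ l z, 0 ≤ pZ l z)
    (hpZ_meas : Measurable fun q : Λ × 𝒵 => pZ q.1 q.2)
    (hpZ_prob : ∀ l, ∫ z, pZ l z ∂νZ = 1)
    -- the cost function
    (D : ℕ) (hD : 0 < D)
    (F : Fin D → 𝒵 → Θ → ℝ)
    (hF_meas : ∀ d, Measurable fun q : 𝒵 × Θ => F d q.1 q.2)
    -- all integrals are finite
    (hInt : ∀ δ : 𝒳 → Fin D, Measurable δ →
      Integrable
        (fun q : Θ × Λ × 𝒳 × 𝒵 =>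
          F (δ q.2.2.1) q.2.2.2 q.1
            * (pΘ q.1 * pΛ q.1 q.2.1 * pX q.2.1 q.2.2.1 * pZ q.2.1 q.2.2.2))
        (νΘ.prod (νΛ.prod (νX.prod νZ))))
    (hInt_a : ∀ (d : Fin D) (θ : Θ) (l : Λ), Integrable (fun z => F d z θ * pZ l z) νZ)
    -- the Bayes risk
    (J : (𝒳 → Fin D) → ℝ)
    (hJ : ∀ δ : 𝒳 → Fin D,
      J δ = ∫ θ, ∫ l, ∫ x, ∫ z,
        F (δ x) z θ * (pΘ θ * pΛ θ l * pX l x * pZ l z) ∂νZ ∂νX ∂νΛ ∂νΘ)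
    -- the function a(θ, λ, d)
    (a : Θ → Λ → Fin D → ℝ)
    (ha : ∀ θ l d, a θ l d = ∫ z, F d z θ * pZ l z ∂νZ)
    -- the candidate optimal quantizer
    (δstar : 𝒳 → Fin D) (hδstar : Measurable δstar) :
    (∀ δ : 𝒳 → Fin D, Measurable δ → J δstar ≤ J δ) ↔
      (∀ᵐ x ∂(νX.withDensity fun x =>
          ENNReal.ofReal (∫ θ, ∫ l, pΘ θ * pΛ θ l * pX l x ∂νΛ ∂νΘ)),
        ∀ d : Fin D,
          (∫ θ, ∫ l, a θ l (δstar x) * (pΘ θ * pΛ θ l * pX l x) ∂νΛ ∂νΘ)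
            ≤ ∫ θ, ∫ l, a θ l d * (pΘ θ * pΛ θ l * pX l x) ∂νΛ ∂νΘ) := by
  classical
  -- abbreviations
  set G : 𝒳 → Fin D → ℝ :=
    fun x d => ∫ θ, ∫ l, a θ l d * (pΘ θ * pΛ θ l * pX l x) ∂νΛ ∂νΘ with hG
  set h : 𝒳 → ℝ := fun x => ∫ θ, ∫ l, pΘ θ * pΛ θ l * pX l x ∂νΛ ∂νΘ with hh
  set W : 𝒳 × Θ × Λ → ℝ := fun q => pΘ q.2.1 * pΛ q.2.1 q.2.2 * pX q.2.2 q.1 with hW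
  -- measures
  set ν3 : Measure (Θ × Λ × 𝒵) := νΘ.prod (νΛ.prod νZ) with hν3
  set ν4 : Measure (Θ × Λ × 𝒳 × 𝒵) := νΘ.prod (νΛ.prod (νX.prod νZ)) with hν4
  set m : Measure (𝒳 × Θ × Λ × 𝒵) := νX.prod ν3 with hm
  set m2 : Measure (𝒳 × Θ × Λ) := νX.prod (νΘ.prod νΛ) with hm2
  -- measure preserving shuffles
  set E4 : Θ × Λ × 𝒳 × 𝒵 ≃ᵐ 𝒳 × Θ × Λ × 𝒵 :=
    ((MeasurableEquiv.refl Θ).prodCongr (quantShuffle Λ 𝒳 𝒵)).trans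
      (quantShuffle Θ 𝒳 (Λ × 𝒵)) with hE4def
  have hE4p : MeasurePreserving (⇑E4) ν4 m := by
    have hfun : ⇑E4 = ⇑(quantShuffle Θ 𝒳 (Λ × 𝒵)) ∘
        Prod.map (id : Θ → Θ) ⇑(quantShuffle Λ 𝒳 𝒵) := by
      funext p; rfl
    rw [hfun]
    exact (quantShuffle_measurePreserving νΘ νX (νΛ.prod νZ)).comp
      ((MeasurePreserving.id νΘ).prod (quantShuffle_measurePreserving νΛ νX νZ))
  -- measurability of W
  have hWmeas : Measurable W := by
    refine ((hpΘ_meas.comp measurable_snd.fst).mul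
      (hpΛ_meas.comp (measurable_snd.fst.prodMk measurable_snd.snd))).mul
      (hpX_meas.comp (measurable_snd.snd.prodMk measurable_fst))
  have hW_nn : ∀ q, 0 ≤ W q := fun q =>
    mul_nonneg (mul_nonneg (hpΘ_nn _) (hpΛ_nn _ _)) (hpX_nn _ _)
  -- W is integrable (total mass 1)
  have l1 : ∀ l : Λ, ∫⁻ x, ENNReal.ofReal (pX l x) ∂νX = 1 := by
    intro l
    rw [← ofReal_integral_eq_lintegral_ofReal
      (quant_integrable_of_integral_eq_one (hpX_prob l))
      (Filter.Eventually.of_forall (hpX_nn l)), hpX_prob l, ENNReal.ofReal_one]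
  have l2 : ∀ θ : Θ, ∫⁻ l, ENNReal.ofReal (pΛ θ l) ∂νΛ = 1 := by
    intro θ
    rw [← ofReal_integral_eq_lintegral_ofReal
      (quant_integrable_of_integral_eq_one (hpΛ_prob θ))
      (Filter.Eventually.of_forall (hpΛ_nn θ)), hpΛ_prob θ, ENNReal.ofReal_one]
  have l3 : ∫⁻ θ, ENNReal.ofReal (pΘ θ) ∂νΘ = 1 := by
    rw [← ofReal_integral_eq_lintegral_ofReal
      (quant_integrable_of_integral_eq_one hpΘ_prob)
      (Filter.Eventually.of_forall hpΘ_nn), hpΘ_prob, ENNReal.ofReal_one]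
  have hE2p : MeasurePreserving
      (⇑(MeasurableEquiv.prodAssoc.symm.trans (MeasurableEquiv.prodComm (α := Θ × Λ) (β := 𝒳))))
      (νΘ.prod (νΛ.prod νX)) m2 := by
    have hfun : ⇑(MeasurableEquiv.prodAssoc.symm.trans (MeasurableEquiv.prodComm (α := Θ × Λ) (β := 𝒳))) =
        (Prod.swap : (Θ × Λ) × 𝒳 → 𝒳 × (Θ × Λ)) ∘
          ⇑(MeasurableEquiv.prodAssoc (α := Θ) (β := Λ) (γ := 𝒳)).symm := by
      funext p; rfl
    rw [hfun]
    exact MeasureTheory.Measure.measurePreserving_swap.comp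
      (MeasurePreserving.symm _ (measurePreserving_prodAssoc νΘ νΛ νX))
  have hWlint : ∫⁻ q, ENNReal.ofReal (W q) ∂m2 = 1 := by
    rw [← hE2p.lintegral_comp hWmeas.ennreal_ofReal]
    have hmm : Measurable fun q : Θ × Λ × 𝒳 =>
        ENNReal.ofReal (pΘ q.1 * pΛ q.1 q.2.1 * pX q.2.1 q.2.2) := by
      refine ENNReal.measurable_ofReal.comp ?_
      exact ((hpΘ_meas.comp measurable_fst).mul
        (hpΛ_meas.comp (measurable_fst.prodMk measurable_snd.fst))).mul
        (hpX_meas.comp (measurable_snd.fst.prodMk measurable_snd.snd))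
    have hcoe : (fun q : Θ × Λ × 𝒳 =>
        ENNReal.ofReal (W ((MeasurableEquiv.prodAssoc.symm.trans
          (MeasurableEquiv.prodComm (α := Θ × Λ) (β := 𝒳))) q))) =
        fun q : Θ × Λ × 𝒳 => ENNReal.ofReal (pΘ q.1 * pΛ q.1 q.2.1 * pX q.2.1 q.2.2) := by
      funext q; rfl
    rw [hcoe, lintegral_prod _ hmm.aemeasurable]
    have hθ : ∀ θ : Θ, (∫⁻ p : Λ × 𝒳,
        ENNReal.ofReal (pΘ θ * pΛ θ p.1 * pX p.1 p.2) ∂(νΛ.prod νX)) = ENNReal.ofReal (pΘ θ) := by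
      intro θ
      have hmm2 : Measurable fun p : Λ × 𝒳 => ENNReal.ofReal (pΘ θ * pΛ θ p.1 * pX p.1 p.2) := by
        refine ENNReal.measurable_ofReal.comp ?_
        exact ((measurable_const.mul (hpΛ_meas.comp
          (measurable_const.prodMk measurable_fst))).mul (hpX_meas.comp
          (measurable_fst.prodMk measurable_snd)))
      rw [lintegral_prod _ hmm2.aemeasurable]
      have hl : ∀ l : Λ, (∫⁻ x, ENNReal.ofReal (pΘ θ * pΛ θ l * pX l x) ∂νX) =
          ENNReal.ofReal (pΘ θ) * ENNReal.ofReal (pΛ θ l) := by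
        intro l
        have : ∀ x, ENNReal.ofReal (pΘ θ * pΛ θ l * pX l x) =
            ENNReal.ofReal (pΘ θ * pΛ θ l) * ENNReal.ofReal (pX l x) := fun x =>
          ENNReal.ofReal_mul (mul_nonneg (hpΘ_nn θ) (hpΛ_nn θ l))
        simp_rw [this]
        have hmx : Measurable fun x : 𝒳 => ENNReal.ofReal (pX l x) :=
          (hpX_meas.comp (measurable_const.prodMk measurable_id)).ennreal_ofReal
        rw [lintegral_const_mul _ hmx, l1 l, mul_one, ENNReal.ofReal_mul (hpΘ_nn θ)]
      simp_rw [hl]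
      have hml : Measurable fun l : Λ => ENNReal.ofReal (pΛ θ l) :=
        (hpΛ_meas.comp (measurable_const.prodMk measurable_id)).ennreal_ofReal
      rw [lintegral_const_mul _ hml, l2 θ, mul_one]
    simp_rw [hθ]
    exact l3
  have hWint : Integrable W m2 := by
    refine ⟨hWmeas.aestronglyMeasurable, ?_⟩
    rw [hasFiniteIntegral_iff_ofReal (Filter.Eventually.of_forall hW_nn), hWlint]
    exact ENNReal.one_lt_top
  -- a.e. properties of h
  have hW_slice : ∀ᵐ x ∂νX, Integrable (fun p : Θ × Λ => W (x, p)) (νΘ.prod νΛ) :=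
    hWint.prod_right_ae
  have h_eq : ∀ᵐ x ∂νX, h x = ∫ p, W (x, p) ∂(νΘ.prod νΛ) := by
    filter_upwards [hW_slice] with x hx
    rw [integral_prod _ hx]
  have h_nn : ∀ x, 0 ≤ h x := fun x =>
    integral_nonneg fun θ => integral_nonneg fun l =>
      mul_nonneg (mul_nonneg (hpΘ_nn θ) (hpΛ_nn θ l)) (hpX_nn l x)
  -- h is measurable
  have h_meas : Measurable h := by
    have hkm : Measurable fun q : (𝒳 × Θ) × Λ => pΘ q.1.2 * pΛ q.1.2 q.2 * pX q.2 q.1.1 := by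
      exact ((hpΘ_meas.comp measurable_fst.snd).mul
        (hpΛ_meas.comp (measurable_fst.snd.prodMk measurable_snd))).mul
        (hpX_meas.comp (measurable_snd.prodMk measurable_fst.fst))
    have hk : StronglyMeasurable fun q : 𝒳 × Θ =>
        ∫ l, pΘ q.2 * pΛ q.2 l * pX l q.1 ∂νΛ :=
      hkm.stronglyMeasurable.integral_prod_right'
    exact hk.integral_prod_right'.measurable
  -- if h x = 0 then all G x d vanish (a.e.)
  have hzero : ∀ᵐ x ∂νX, h x = 0 → ∀ d : Fin D, G x d = 0 := by
    filter_upwards [hW_slice, h_eq] with x hx hx2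
    intro h0 d
    have hW0 : (fun p : Θ × Λ => W (x, p)) =ᵐ[νΘ.prod νΛ] 0 := by
      refine (integral_eq_zero_iff_of_nonneg (fun p => hW_nn (x, p)) hx).mp ?_
      rw [← hx2]; exact h0
    have hae := Measure.ae_ae_of_ae_prod hW0
    simp only [hG]
    have : ∀ᵐ θ ∂νΘ, (∫ l, a θ l d * (pΘ θ * pΛ θ l * pX l x) ∂νΛ) = 0 := by
      filter_upwards [hae] with θ hθ
      have : (fun l => a θ l d * (pΘ θ * pΛ θ l * pX l x)) =ᵐ[νΛ] 0 := by
        filter_upwards [hθ] with l hl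
        have hl' : pΘ θ * pΛ θ l * pX l x = 0 := hl
        simp [hl']
      rw [integral_congr_ae this]
      simp
    rw [integral_congr_ae this]
    simp
  -- the key computation: J δ = ∫ x, (slice integral) with the slice a.e. equal to G x (δ x)
  have main : ∀ δ : 𝒳 → Fin D, Measurable δ → ∃ I : 𝒳 → ℝ,
      Measurable I ∧ Integrable I νX ∧ J δ = ∫ x, I x ∂νX ∧
        I =ᵐ[νX] fun x => G x (δ x) := by
    intro δ hδ
    set f' : 𝒳 × Θ × Λ × 𝒵 → ℝ := fun q =>
      F (δ q.1) q.2.2.2 q.2.1 *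
        (pΘ q.2.1 * pΛ q.2.1 q.2.2.1 * pX q.2.2.1 q.1 * pZ q.2.2.1 q.2.2.2) with hf'
    have hF2 : Measurable fun p : (𝒵 × Θ) × Fin D => F p.2 p.1.1 p.1.2 :=
      measurable_from_prod_countable_left fun d => hF_meas d
    have hf'm : Measurable f' := by
      refine Measurable.mul ?_ ?_
      · exact hF2.comp (((measurable_snd.snd.snd.prodMk measurable_snd.fst)).prodMk
          (hδ.comp measurable_fst))
      · exact (((hpΘ_meas.comp measurable_snd.fst).mul
          (hpΛ_meas.comp (measurable_snd.fst.prodMk measurable_snd.snd.fst))).mul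
          (hpX_meas.comp (measurable_snd.snd.fst.prodMk measurable_fst))).mul
          (hpZ_meas.comp (measurable_snd.snd.fst.prodMk measurable_snd.snd.snd))
    have hcomp : Integrable (f' ∘ ⇑E4) ν4 := hInt δ hδ
    have hf'i : Integrable f' m := (hE4p.integrable_comp_emb E4.measurableEmbedding).mp hcomp
    refine ⟨fun x => ∫ p, f' (x, p) ∂ν3,
      hf'm.stronglyMeasurable.integral_prod_right'.measurable,
      hf'i.integral_prod_left, ?_, ?_⟩
    · have e1 : (∫ θ, ∫ l, ∫ x, ∫ z,
          F (δ x) z θ * (pΘ θ * pΛ θ l * pX l x * pZ l z) ∂νZ ∂νX ∂νΛ ∂νΘ) =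
          ∫ q, (fun q : Θ × Λ × 𝒳 × 𝒵 =>
            F (δ q.2.2.1) q.2.2.2 q.1
              * (pΘ q.1 * pΛ q.1 q.2.1 * pX q.2.1 q.2.2.1 * pZ q.2.1 q.2.2.2)) q ∂ν4 :=
        (quant_integral_quad νΘ νΛ νX νZ (hInt δ hδ)).symm
      have e2 : (∫ q, (fun q : Θ × Λ × 𝒳 × 𝒵 =>
            F (δ q.2.2.1) q.2.2.2 q.1
              * (pΘ q.1 * pΛ q.1 q.2.1 * pX q.2.1 q.2.2.1 * pZ q.2.1 q.2.2.2)) q ∂ν4) =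
          ∫ q, f' q ∂m := hE4p.integral_comp E4.measurableEmbedding f'
      rw [hJ δ, e1, e2]
      exact integral_prod f' hf'i
    · filter_upwards [hf'i.prod_right_ae] with x hx
      have e3 : (∫ p, f' (x, p) ∂ν3) =
          ∫ θ, ∫ l, ∫ z, f' (x, (θ, (l, z))) ∂νZ ∂νΛ ∂νΘ :=
        quant_integral_triple νΘ νΛ νZ hx
      rw [e3]
      simp only [hG]
      refine integral_congr_ae (Filter.Eventually.of_forall fun θ => ?_)
      refine integral_congr_ae (Filter.Eventually.of_forall fun l => ?_)
      have hz : ∀ z : 𝒵, f' (x, (θ, (l, z))) =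
          (pΘ θ * pΛ θ l * pX l x) * (F (δ x) z θ * pZ l z) := by
        intro z
        simp only [hf']
        ring
      simp_rw [hz]
      rw [integral_const_mul, ha]
      ring
  obtain ⟨Istar, hIstar_m, hIstar_i, hJstar, hIstar_ae⟩ := main δstar hδstar
  -- reduce the withDensity a.e. statement to a νX a.e. statement
  suffices H : (∀ δ : 𝒳 → Fin D, Measurable δ → J δstar ≤ J δ) ↔
      (∀ᵐ x ∂(νX.withDensity fun x => ENNReal.ofReal (h x)),
        ∀ d : Fin D, G x (δstar x) ≤ G x d) by
    simpa only [hh, hG] using H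
  have equiv2 : (∀ᵐ x ∂(νX.withDensity fun x => ENNReal.ofReal (h x)),
      ∀ d : Fin D, G x (δstar x) ≤ G x d) ↔
      (∀ᵐ x ∂νX, ∀ d : Fin D, G x (δstar x) ≤ G x d) := by
    rw [ae_withDensity_iff h_meas.ennreal_ofReal]
    constructor
    · intro H
      filter_upwards [H, hzero] with x hx hx0
      intro d
      by_cases hc : h x = 0
      · rw [hx0 hc d, hx0 hc (δstar x)]
      · refine hx ?_ d
        simp only [Function.comp_apply, ne_eq, ENNReal.ofReal_eq_zero, not_le]
        exact lt_of_le_of_ne (h_nn x) (Ne.symm hc)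
    · intro H
      filter_upwards [H] with x hx _
      exact hx
  rw [equiv2]
  constructor
  · -- optimality implies pointwise a.e. optimality
    intro hopt
    rw [ae_all_iff]
    intro d
    obtain ⟨Id, hId_m, hId_i, hJd, hId_ae⟩ := main (fun _ => d) measurable_const
    set s : Set 𝒳 := {x | Id x < Istar x} with hs
    have hsm : MeasurableSet s := measurableSet_lt hId_m hIstar_m
    set δ' : 𝒳 → Fin D := s.piecewise (fun _ => d) δstar with hδ'
    have hδ'm : Measurable δ' := Measurable.piecewise hsm measurable_const hδstar
    obtain ⟨I', hI'_m, hI'_i, hJ', hI'_ae⟩ := main δ' hδ'm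
    have hle : I' ≤ᵐ[νX] Istar := by
      filter_upwards [hI'_ae, hIstar_ae, hId_ae] with x h1 h2 h3
      by_cases hxs : x ∈ s
      · have hd : δ' x = d := Set.piecewise_eq_of_mem s _ _ hxs
        rw [h1, hd, ← h3]
        exact le_of_lt hxs
      · have hd : δ' x = δstar x := Set.piecewise_eq_of_notMem s _ _ hxs
        rw [h1, hd]
        exact h2.symm.le
    have hint_eq : ∫ x, I' x ∂νX = ∫ x, Istar x ∂νX := by
      refine le_antisymm (integral_mono_ae hI'_i hIstar_i hle) ?_
      rw [← hJ', ← hJstar]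
      exact hopt δ' hδ'm
    have hae0 : (fun x => Istar x - I' x) =ᵐ[νX] 0 := by
      have hz : ∫ x, (Istar x - I' x) ∂νX = 0 := by
        rw [integral_sub hIstar_i hI'_i, hint_eq, sub_self]
      exact (integral_eq_zero_iff_of_nonneg_ae
        (hle.mono fun x hx => sub_nonneg.2 hx) (hIstar_i.sub hI'_i)).mp hz
    filter_upwards [hae0, hI'_ae, hIstar_ae, hId_ae] with x h0 h1 h2 h3
    by_contra hcon
    push_neg at hcon
    have hxs : x ∈ s := by
      simp only [hs, Set.mem_setOf_eq]
      rw [h3, h2]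
      exact hcon
    have hd : δ' x = d := Set.piecewise_eq_of_mem s _ _ hxs
    have hIx : Istar x = I' x := by
      have h0' : Istar x - I' x = 0 := h0
      linarith
    have heq : Istar x = Id x := by rw [hIx, h1, hd, h3]
    have hlt : Id x < Istar x := hxs
    rw [heq] at hlt
    exact lt_irrefl _ hlt
  · -- pointwise a.e. optimality implies optimality
    intro H δ hδ
    obtain ⟨Iδ, hIδ_m, hIδ_i, hJδ, hIδ_ae⟩ := main δ hδ
    rw [hJstar, hJδ]
    refine integral_mono_ae hIstar_i hIδ_i ?_
    filter_upwards [H, hIstar_ae, hIδ_ae] with x hx h1 h2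
    rw [h1, h2]
    exact hx (δ x)
end

section
/- Consider a distributed estimation system in which the fusion center makes no observation, the parameter θ has prior density p_Θ, a hidden variable λ has conditional density p_Λ(λ|θ), and the sensor observations Y_1, …, Y_N are conditionally independent given λ with densities p_i(y_i|λ) (hierarchical conditional independence), though possibly dependent given θ. Fix i and fix measurable quantizers γ_j : 𝒴_j → {1,…,D_j} for all j ≠ i. Define, for each θ, λ, and d ∈ {1,…,D_i}, a(θ, λ, d) = E[C(γ_0(U_1,…,U_{i−1}, d, U_{i+1},…,U_N), U_1,…,U_{i−1}, d, U_{i+1},…,U_N, θ) | θ, λ], where U_j = γ_j(Y_j). Then γ_i minimizes the Bayes risk J(γ) = E[C(γ_0(γ_1(Y_1),…,γ_N(Y_N)), γ_1(Y_1),…,γ_N(Y_N), θ)] over all measurable quantizers 𝒴_i → {1,…,D_i} only if, for almost every y_i with respect to the marginal distribution of Y_i, γ_i(y_i) minimizes d ↦ ∫∫ a(θ, λ, d)·p_Θ(θ)·p_Λ(λ|θ)·p_i(y_i|λ) dν_Θ(θ) dν_Λ(λ) over d ∈ {1,…,D_i}. -/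
/-!
Under hierarchical conditional independence the Bayes-risk integrand, for fixed `(θ, λ)`, is
`p_i(y_i | λ)` times a function of the other observations and of the level `u_i = δ(y_i)` emitted
by sensor `i`. Integrating out the other sensors (with `∫ p_i(· | λ) = 1`) therefore writes the
risk of the strategy using `δ` at sensor `i` as `∫ F(y, δ y) dν_i(y)`, where `F(y, d)` is the
unnormalised posterior cost of emitting `d` when `Y_i = y`. If `γ_i(y)` were beaten by some `d`
on a set of positive measure, switching to `d` on that set would strictly lower the risk.
-/

open MeasureTheory

theorem Measurable.apply_countable {α K β : Type*} [MeasurableSpace α] [MeasurableSpace K]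
    [MeasurableSpace β] [Countable K] [MeasurableSingletonClass K] {u : α → K}
    (hu : Measurable u) {f : K → α → β} (hf : ∀ k, Measurable (f k)) :
    Measurable fun x => f (u x) x :=
  (measurable_from_prod_countable_left (f := fun q : α × K => f q.2 q.1) hf).comp
    (measurable_id.prodMk hu)

theorem measurable_update_apply {ι : Type*} [DecidableEq ι] {α β : ι → Type*}
    [∀ j, MeasurableSpace (α j)] [∀ j, MeasurableSpace (β j)] {f : ∀ j, α j → β j} {i : ι}
    {g : α i → β i} (hf : ∀ j, Measurable (f j)) (hg : Measurable g) (j : ι) :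
    Measurable (Function.update f i g j) := by
  rcases eq_or_ne j i with rfl | hj
  · simpa using hg
  · simpa [Function.update_of_ne hj] using hf j

theorem ae_forall_le_of_forall_integral_le {Y K : Type*} [MeasurableSpace Y] [MeasurableSpace K]
    [Countable K] [MeasurableSingletonClass K] {μ : Measure Y} {F : Y → K → ℝ}
    (hF : ∀ k, Measurable (F · k)) {g : Y → K} (hg : Measurable g)
    (hint : ∀ δ : Y → K, Measurable δ → Integrable (fun y => F y (δ y)) μ)
    (hmin : ∀ δ : Y → K, Measurable δ → ∫ y, F y (g y) ∂μ ≤ ∫ y, F y (δ y) ∂μ) :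
    ∀ᵐ y ∂μ, ∀ k, F y (g y) ≤ F y k := by
  classical
  rw [ae_all_iff]
  intro k
  set S := {y | F y k < F y (g y)}
  have hS : MeasurableSet S := measurableSet_lt (hF k) (hg.apply_countable hF)
  set δ : Y → K := S.piecewise (fun _ => k) g
  have hδ : Measurable δ := measurable_const.piecewise hS hg
  have hδ_le : ∀ y, F y (δ y) ≤ F y (g y) := by
    intro y
    by_cases hy : y ∈ S
    · simpa only [δ, Set.piecewise_eq_of_mem _ _ _ hy] using hy.le
    · simp only [δ, Set.piecewise_eq_of_notMem _ _ _ hy, le_refl]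
  have hδ_eq : (fun y => F y (δ y)) =ᵐ[μ] fun y => F y (g y) :=
    (integral_eq_iff_of_ae_le (hint δ hδ) (hint g hg) (.of_forall hδ_le)).1
      ((integral_mono (hint δ hδ) (hint g hg) hδ_le).antisymm (hmin δ hδ))
  filter_upwards [hδ_eq] with y hy
  by_contra hlt
  have hy_mem : y ∈ S := lt_of_not_ge hlt
  simp only [δ, Set.piecewise_eq_of_mem _ _ _ hy_mem] at hy
  exact hlt hy.ge

def MeasurableEquiv.prodLeftComm (α β γ : Type*) [MeasurableSpace α] [MeasurableSpace β]
    [MeasurableSpace γ] : α × β × γ ≃ᵐ β × α × γ :=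
  (prodAssoc.symm.trans (prodComm.prodCongr (refl γ))).trans prodAssoc

theorem measurePreserving_prodLeftComm {α β γ : Type*} [MeasurableSpace α] [MeasurableSpace β]
    [MeasurableSpace γ] (μ : Measure α) (ν : Measure β) (ρ : Measure γ)
    [SFinite μ] [SFinite ν] [SFinite ρ] :
    MeasurePreserving (MeasurableEquiv.prodLeftComm α β γ) (μ.prod (ν.prod ρ))
      (ν.prod (μ.prod ρ)) :=
  (((measurePreserving_prodAssoc μ ν ρ).symm _).trans
    (Measure.measurePreserving_swap.prod (.id ρ))).trans (measurePreserving_prodAssoc ν μ ρ)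

theorem integral_prod_prod {α β γ E : Type*} [MeasurableSpace α] [MeasurableSpace β]
    [MeasurableSpace γ] [NormedAddCommGroup E] [NormedSpace ℝ E]
    {μ : Measure α} {ν : Measure β} {ρ : Measure γ} [SFinite μ] [SFinite ν] [SFinite ρ]
    {f : α × β × γ → E} (hf : Integrable f (μ.prod (ν.prod ρ))) :
    ∫ q, f q ∂μ.prod (ν.prod ρ) = ∫ a, ∫ b, ∫ c, f (a, b, c) ∂ρ ∂ν ∂μ := by
  rw [integral_prod f hf]
  refine integral_congr_ae ?_
  filter_upwards [hf.prod_right_ae] with a ha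
  exact integral_prod _ ha

theorem Fin.update_apply_insertNth {n : ℕ} {X U : Fin (n + 1) → Type*} (γ : ∀ j, X j → U j)
    (i : Fin (n + 1)) (x : X i) (r : ∀ j, X (i.succAbove j)) (d : U i) :
    Function.update (fun j => γ j (i.insertNth x r j)) i d = i.insertNth d fun j => γ _ (r j) := by
  rw [Fin.eq_insertNth_iff]
  refine ⟨by simp, funext fun j => ?_⟩
  simp [Fin.removeNth_apply]

theorem Fin.prod_apply_insertNth {n : ℕ} {X : Fin (n + 1) → Type*} {M : Type*} [CommMonoid M]
    (q : ∀ j, X j → M) (i : Fin (n + 1)) (x : X i) (r : ∀ j, X (i.succAbove j)) :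
    ∏ j, q j (i.insertNth x r j) = q i x * ∏ j, q _ (r j) := by
  simp [Fin.prod_univ_succAbove _ i]

section InsertNth

variable {α β : Type*} [MeasurableSpace α] [MeasurableSpace β] {n : ℕ}
  {X : Fin (n + 1) → Type*} [∀ j, MeasurableSpace (X j)] (i : Fin (n + 1))

def MeasurableEquiv.prodProdInsertNth :
    X i × α × β × (∀ j, X (i.succAbove j)) ≃ᵐ α × β × ∀ j, X j :=
  ((prodLeftComm _ _ _).trans ((refl α).prodCongr (prodLeftComm _ _ _))).trans
    ((refl α).prodCongr ((refl β).prodCongr (piFinSuccAbove X i).symm))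

variable {μ : Measure α} {ν : Measure β} {ρ : ∀ j, Measure (X j)}
  [SFinite μ] [SFinite ν] [∀ j, SigmaFinite (ρ j)]

theorem measurePreserving_prodProdInsertNth :
    MeasurePreserving (MeasurableEquiv.prodProdInsertNth (α := α) (β := β) i)
      ((ρ i).prod (μ.prod (ν.prod (Measure.pi fun j => ρ (i.succAbove j)))))
      (μ.prod (ν.prod (Measure.pi ρ))) :=
  ((measurePreserving_prodLeftComm _ _ _).trans
    ((MeasurePreserving.id μ).prod (measurePreserving_prodLeftComm _ _ _))).trans
    ((MeasurePreserving.id μ).prod ((MeasurePreserving.id ν).prod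
      ((measurePreserving_piFinSuccAbove ρ i).symm _)))

variable {E : Type*} [NormedAddCommGroup E] [NormedSpace ℝ E] {f : α × β × (∀ j, X j) → E}

theorem MeasureTheory.Integrable.integrable_integral_insertNth
    (hf : Integrable f (μ.prod (ν.prod (Measure.pi ρ)))) :
    Integrable (fun x => ∫ a, ∫ b, ∫ r, f (a, b, i.insertNth x r)
      ∂(Measure.pi fun j => ρ (i.succAbove j)) ∂ν ∂μ) (ρ i) := by
  have hfe := ((measurePreserving_prodProdInsertNth i).integrable_comp_emb
    (MeasurableEquiv.measurableEmbedding _)).2 hf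
  refine hfe.integral_prod_left.congr ?_
  filter_upwards [hfe.prod_right_ae] with x hx
  exact integral_prod_prod hx

theorem integral_integral_integral_pi_eq_integral_insertNth
    (hf : Integrable f (μ.prod (ν.prod (Measure.pi ρ)))) :
    ∫ a, ∫ b, ∫ y, f (a, b, y) ∂Measure.pi ρ ∂ν ∂μ =
      ∫ x, ∫ a, ∫ b, ∫ r, f (a, b, i.insertNth x r)
        ∂(Measure.pi fun j => ρ (i.succAbove j)) ∂ν ∂μ ∂ρ i := by
  have he := measurePreserving_prodProdInsertNth (μ := μ) (ν := ν) (ρ := ρ) i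
  have hfe := (he.integrable_comp_emb (MeasurableEquiv.measurableEmbedding _)).2 hf
  rw [← integral_prod_prod hf, ← he.integral_comp',
    integral_prod (fun z => f (MeasurableEquiv.prodProdInsertNth i z)) hfe]
  refine integral_congr_ae ?_
  filter_upwards [hfe.prod_right_ae] with x hx
  exact integral_prod_prod hx

end InsertNth

section QuantizerRisk

variable {Θ Λ : Type*} {n : ℕ} {X U : Fin (n + 1) → Type*} [∀ j, MeasurableSpace (X j)]
  (ν : ∀ j, Measure (X j)) (pΘ : Θ → ℝ) (pΛ : Θ → Λ → ℝ) (p : ∀ j, Λ → X j → ℝ)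
  (c : (∀ j, U j) → Θ → ℝ)

-- `c u θ` stands for the cost `C(γ₀ u, u, θ)` of the fused output; `condCost` is the paper's
-- `a(θ, λ, d)`.
def riskIntegrand (γ : ∀ j, X j → U j) (q : Θ × Λ × ∀ j, X j) : ℝ :=
  c (fun j => γ j (q.2.2 j)) q.1 * (pΘ q.1 * pΛ q.1 q.2.1 * ∏ j, p j q.2.1 (q.2.2 j))

noncomputable def condCost (γ : ∀ j, X j → U j) (i : Fin (n + 1)) (θ : Θ) (l : Λ) (d : U i) :
    ℝ :=
  ∫ y, c (Function.update (fun j => γ j (y j)) i d) θ * ∏ j, p j l (y j) ∂Measure.pi ν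

variable {ν pΘ pΛ p c} [∀ j, SigmaFinite (ν j)] {i : Fin (n + 1)}

theorem condCost_eq_integral_insertNth (γ : ∀ j, X j → U j) (hp : ∀ l, ∫ x, p i l x ∂ν i = 1)
    (θ : Θ) (l : Λ) (d : U i) :
    condCost ν p c γ i θ l d = ∫ r, c (i.insertNth d fun j => γ _ (r j)) θ *
      ∏ j, p (i.succAbove j) l (r j) ∂Measure.pi fun j => ν (i.succAbove j) := by
  rw [condCost, ← ((measurePreserving_piFinSuccAbove ν i).symm _).integral_comp']
  simp only [MeasurableEquiv.piFinSuccAbove_symm_apply, Fin.insertNthEquiv_apply,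
    Fin.update_apply_insertNth, Fin.prod_apply_insertNth (fun j => p j l)]
  simp_rw [mul_left_comm (c _ θ)]
  have := integral_prod_mul (μ := ν i) (ν := Measure.pi fun j => ν (i.succAbove j))
    (fun x => p i l x) (fun r => c (i.insertNth d fun j => γ _ (r j)) θ *
      ∏ j, p (i.succAbove j) l (r j))
  rwa [hp, one_mul] at this

theorem integral_riskIntegrand_update_insertNth (γ : ∀ j, X j → U j) (δ : X i → U i)
    (hp : ∀ l, ∫ x, p i l x ∂ν i = 1) (θ : Θ) (l : Λ) (x : X i) :
    ∫ r, riskIntegrand pΘ pΛ p c (Function.update γ i δ) (θ, l, i.insertNth x r)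
        ∂Measure.pi (fun j => ν (i.succAbove j)) =
      condCost ν p c γ i θ l (δ x) * (pΘ θ * pΛ θ l * p i l x) := by
  have hpt : ∀ r, riskIntegrand pΘ pΛ p c (Function.update γ i δ) (θ, l, i.insertNth x r) =
      (c (i.insertNth (δ x) fun j => γ _ (r j)) θ * ∏ j, p (i.succAbove j) l (r j)) *
        (pΘ θ * pΛ θ l * p i l x) := by
    intro r
    simp only [riskIntegrand,
      Function.apply_update (fun j (g : X j → U j) => g (i.insertNth x r j)),
      Fin.insertNth_apply_same, Fin.update_apply_insertNth,
      Fin.prod_apply_insertNth (fun j => p j l)]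
    ring
  rw [integral_congr_ae (.of_forall hpt), integral_mul_const,
    condCost_eq_integral_insertNth γ hp]

variable (pΘ pΛ) [MeasurableSpace Θ] [MeasurableSpace Λ] (νΘ : Measure Θ) (νΛ : Measure Λ)

noncomputable def posteriorCost {Y K : Type*} (q : Λ → Y → ℝ) (a : Θ → Λ → K → ℝ) (y : Y)
    (d : K) : ℝ :=
  ∫ θ, ∫ l, a θ l d * (pΘ θ * pΛ θ l * q l y) ∂νΛ ∂νΘ

variable {pΘ pΛ νΘ νΛ} [SFinite νΘ] [SFinite νΛ]

theorem integral_riskIntegrand_update (γ : ∀ j, X j → U j) (δ : X i → U i)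
    (hp : ∀ l, ∫ x, p i l x ∂ν i = 1)
    (hint : Integrable (riskIntegrand pΘ pΛ p c (Function.update γ i δ))
      (νΘ.prod (νΛ.prod (Measure.pi ν)))) :
    ∫ θ, ∫ l, ∫ y, riskIntegrand pΘ pΛ p c (Function.update γ i δ) (θ, l, y)
        ∂Measure.pi ν ∂νΛ ∂νΘ =
      ∫ x, posteriorCost pΘ pΛ νΘ νΛ (p i) (condCost ν p c γ i) x (δ x) ∂ν i := by
  simp_rw [integral_integral_integral_pi_eq_integral_insertNth i hint,
    integral_riskIntegrand_update_insertNth γ δ hp]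
  rfl

theorem integrable_posteriorCost_condCost (γ : ∀ j, X j → U j) (δ : X i → U i)
    (hp : ∀ l, ∫ x, p i l x ∂ν i = 1)
    (hint : Integrable (riskIntegrand pΘ pΛ p c (Function.update γ i δ))
      (νΘ.prod (νΛ.prod (Measure.pi ν)))) :
    Integrable (fun x => posteriorCost pΘ pΛ νΘ νΛ (p i) (condCost ν p c γ i) x (δ x)) (ν i) := by
  have h := hint.integrable_integral_insertNth i
  simp only [integral_riskIntegrand_update_insertNth γ δ hp] at h
  exact h

theorem measurable_posteriorCost {K : Type*} {a : Θ → Λ → K → ℝ} (d : K)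
    (ha : Measurable fun q : Θ × Λ => a q.1 q.2 d) (hpΘ : Measurable pΘ)
    (hpΛ : Measurable fun q : Θ × Λ => pΛ q.1 q.2)
    (hp : Measurable fun q : Λ × X i => p i q.1 q.2) :
    Measurable fun x => posteriorCost pΘ pΛ νΘ νΛ (p i) a x d := by
  have hjoint : Measurable fun q : (X i × Θ) × Λ =>
      a q.1.2 q.2 d * (pΘ q.1.2 * pΛ q.1.2 q.2 * p i q.2 q.1.1) := by
    fun_prop
  exact (hjoint.stronglyMeasurable.integral_prod_right'.integral_prod_right').measurable

theorem measurable_condCost [∀ j, MeasurableSpace (U j)] [∀ j, Countable (U j)]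
    [∀ j, MeasurableSingletonClass (U j)] {γ : ∀ j, X j → U j} (d : U i)
    (hc : ∀ u, Measurable (c u)) (hγ : ∀ j, Measurable (γ j))
    (hp : ∀ j, Measurable fun q : Λ × X j => p j q.1 q.2) :
    Measurable fun q : Θ × Λ => condCost ν p c γ i q.1 q.2 d := by
  have hjoint : Measurable fun q : (Θ × Λ) × (∀ j, X j) =>
      c (Function.update (fun j => γ j (q.2 j)) i d) q.1.1 * ∏ j, p j q.1.2 (q.2 j) := by
    have hu : Measurable fun y : ∀ j, X j => Function.update (fun j => γ j (y j)) i d := by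
      fun_prop
    refine .mul ?_ (by fun_prop)
    exact (hu.comp measurable_snd).apply_countable
      (f := fun u (q : (Θ × Λ) × (∀ j, X j)) => c u q.1.1) fun u => (hc u).comp measurable_fst.fst
  exact hjoint.stronglyMeasurable.integral_prod_right'.measurable

end QuantizerRisk

theorem necessary_condition_optimal_quantizer_dependent_general
    {Θ Λ : Type*} [MeasurableSpace Θ] [MeasurableSpace Λ]
    {N : ℕ} (𝒴 : Fin N → Type*) [∀ j, MeasurableSpace (𝒴 j)]
    (νΘ : Measure Θ) (νΛ : Measure Λ) (ν : ∀ j, Measure (𝒴 j))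
    [SigmaFinite νΘ] [SigmaFinite νΛ] [∀ j, SigmaFinite (ν j)]
    -- prior density of θ and conditional density of the hidden variable λ given θ
    (pΘ : Θ → ℝ) (hpΘ_meas : Measurable pΘ)
    (pΛ : Θ → Λ → ℝ)
    (hpΛ_meas : Measurable fun q : Θ × Λ => pΛ q.1 q.2)
    -- conditional densities of the observations given λ (HCI)
    (p : ∀ j, Λ → 𝒴 j → ℝ)
    (hp_meas : ∀ j, Measurable fun q : Λ × 𝒴 j => p j q.1 q.2)
    (hp_prob : ∀ j l, ∫ y, p j l y ∂(ν j) = 1)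
    -- numbers of quantization levels, estimator and cost function
    (D : Fin N → ℕ)
    (γ₀ : (∀ j, Fin (D j)) → Θ)
    (C : Θ → (∀ j, Fin (D j)) → Θ → ℝ)
    (hC_meas : ∀ u, Measurable fun q : Θ × Θ => C q.1 u q.2)
    -- the strategy, with quantizers γ_j fixed for j ≠ i
    (γ : ∀ j, 𝒴 j → Fin (D j)) (hγ_meas : ∀ j, Measurable (γ j))
    (i : Fin N)
    -- all integrals are finite
    (hInt : ∀ γ' : ∀ j, 𝒴 j → Fin (D j), (∀ j, Measurable (γ' j)) →
      Integrable
        (fun q : Θ × Λ × (∀ j, 𝒴 j) =>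
          C (γ₀ fun j => γ' j (q.2.2 j)) (fun j => γ' j (q.2.2 j)) q.1
            * (pΘ q.1 * pΛ q.1 q.2.1 * ∏ j, p j q.2.1 (q.2.2 j)))
        (νΘ.prod (νΛ.prod (Measure.pi ν))))
    -- the Bayes risk
    (J : (∀ j, 𝒴 j → Fin (D j)) → ℝ)
    (hJ : ∀ γ' : ∀ j, 𝒴 j → Fin (D j),
      J γ' = ∫ θ, ∫ l, ∫ y,
        C (γ₀ fun j => γ' j (y j)) (fun j => γ' j (y j)) θ
          * (pΘ θ * pΛ θ l * ∏ j, p j l (y j)) ∂(Measure.pi ν) ∂νΛ ∂νΘ)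
    -- a(θ, λ, d): conditional expectation of the cost given (θ, λ), with d at slot i
    (a : Θ → Λ → Fin (D i) → ℝ)
    (ha : ∀ θ l d, a θ l d = ∫ y,
      C (γ₀ (Function.update (fun j => γ j (y j)) i d))
          (Function.update (fun j => γ j (y j)) i d) θ
        * ∏ j, p j l (y j) ∂(Measure.pi ν))
    -- γ_i minimizes the Bayes risk over all measurable quantizers at sensor i
    (hmin : ∀ δ : 𝒴 i → Fin (D i), Measurable δ → J γ ≤ J (Function.update γ i δ)) :
    -- necessary condition: a.e. pointwise minimization w.r.t. the marginal of Y_i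
    ∀ᵐ yᵢ ∂((ν i).withDensity fun y =>
        ENNReal.ofReal (∫ θ, ∫ l, pΘ θ * pΛ θ l * p i l y ∂νΛ ∂νΘ)),
      ∀ d : Fin (D i),
        (∫ θ, ∫ l, a θ l (γ i yᵢ) * (pΘ θ * pΛ θ l * p i l yᵢ) ∂νΛ ∂νΘ)
          ≤ ∫ θ, ∫ l, a θ l d * (pΘ θ * pΛ θ l * p i l yᵢ) ∂νΛ ∂νΘ := by
  obtain ⟨n, rfl⟩ := Nat.exists_eq_add_one_of_ne_zero i.pos.ne'
  obtain rfl : a = condCost ν p (fun u θ => C (γ₀ u) u θ) γ i := funext₃ ha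
  set c : (∀ j, Fin (D j)) → Θ → ℝ := fun u θ => C (γ₀ u) u θ
  have hc : ∀ u, Measurable (c u) := fun u =>
    (hC_meas u).comp (measurable_const.prodMk measurable_id)
  have hint : ∀ δ : 𝒴 i → Fin (D i), Measurable δ →
      Integrable (riskIntegrand pΘ pΛ p c (Function.update γ i δ))
        (νΘ.prod (νΛ.prod (Measure.pi ν))) :=
    fun δ hδ => hInt _ (measurable_update_apply hγ_meas hδ)
  have hrisk : ∀ δ : 𝒴 i → Fin (D i), Measurable δ → J (Function.update γ i δ) =
      ∫ x, posteriorCost pΘ pΛ νΘ νΛ (p i) (condCost ν p c γ i) x (δ x) ∂ν i := by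
    intro δ hδ
    rw [hJ]
    exact integral_riskIntegrand_update γ δ (hp_prob i) (hint δ hδ)
  refine (withDensity_absolutelyContinuous _ _).ae_le ?_
  refine ae_forall_le_of_forall_integral_le
    (fun d => measurable_posteriorCost d (measurable_condCost d hc hγ_meas hp_meas)
      hpΘ_meas hpΛ_meas (hp_meas i)) (hγ_meas i)
    (fun δ hδ => integrable_posteriorCost_condCost γ δ (hp_prob i) (hint δ hδ))
    fun δ hδ => ?_
  rw [← hrisk δ hδ, ← hrisk _ (hγ_meas i), Function.update_eq_self]
  exact hmin δ hδ

/-- In the hierarchical conditional independence model (the fusion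
center makes no observation; the sensor observations `Y_1,…,Y_N` are conditionally
independent given the hidden variable `λ`, though possibly dependent given `θ`),
with fixed measurable quantizers `γ_j` for `j ≠ i`, the quantizer `γ_i` minimizes
the Bayes risk only if, for a.e. `y_i` w.r.t. the marginal distribution of `Y_i`,
`γ_i(y_i)` minimizes `d ↦ ∫∫ a(θ,λ,d) pΘ(θ) pΛ(λ|θ) p_i(y_i|λ) dνΘ dνΛ`. -/
theorem necessary_condition_optimal_quantizer_dependent
    {Θ Λ : Type*} [MeasurableSpace Θ] [MeasurableSpace Λ]
    {N : ℕ} (𝒴 : Fin N → Type*) [∀ j, MeasurableSpace (𝒴 j)]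
    (νΘ : Measure Θ) (νΛ : Measure Λ) (ν : ∀ j, Measure (𝒴 j))
    [SigmaFinite νΘ] [SigmaFinite νΛ] [∀ j, SigmaFinite (ν j)]
    -- prior density of θ and conditional density of the hidden variable λ given θ
    (pΘ : Θ → ℝ) (hpΘ_nn : ∀ θ, 0 ≤ pΘ θ) (hpΘ_meas : Measurable pΘ)
    (hpΘ_prob : ∫ θ, pΘ θ ∂νΘ = 1)
    (pΛ : Θ → Λ → ℝ) (hpΛ_nn : ∀ θ l, 0 ≤ pΛ θ l)
    (hpΛ_meas : Measurable fun q : Θ × Λ => pΛ q.1 q.2)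
    (hpΛ_prob : ∀ θ, ∫ l, pΛ θ l ∂νΛ = 1)
    -- conditional densities of the observations given λ (HCI)
    (p : ∀ j, Λ → 𝒴 j → ℝ) (hp_nn : ∀ j l y, 0 ≤ p j l y)
    (hp_meas : ∀ j, Measurable fun q : Λ × 𝒴 j => p j q.1 q.2)
    (hp_prob : ∀ j l, ∫ y, p j l y ∂(ν j) = 1)
    -- numbers of quantization levels, estimator and cost function
    (D : Fin N → ℕ) (hD : ∀ j, 0 < D j)
    (γ₀ : (∀ j, Fin (D j)) → Θ)
    (C : Θ → (∀ j, Fin (D j)) → Θ → ℝ)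
    (hC_meas : ∀ u, Measurable fun q : Θ × Θ => C q.1 u q.2)
    -- the strategy, with quantizers γ_j fixed for j ≠ i
    (γ : ∀ j, 𝒴 j → Fin (D j)) (hγ_meas : ∀ j, Measurable (γ j))
    (i : Fin N)
    -- all integrals are finite
    (hInt : ∀ γ' : ∀ j, 𝒴 j → Fin (D j), (∀ j, Measurable (γ' j)) →
      Integrable
        (fun q : Θ × Λ × (∀ j, 𝒴 j) =>
          C (γ₀ fun j => γ' j (q.2.2 j)) (fun j => γ' j (q.2.2 j)) q.1
            * (pΘ q.1 * pΛ q.1 q.2.1 * ∏ j, p j q.2.1 (q.2.2 j)))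
        (νΘ.prod (νΛ.prod (Measure.pi ν))))
    -- the Bayes risk
    (J : (∀ j, 𝒴 j → Fin (D j)) → ℝ)
    (hJ : ∀ γ' : ∀ j, 𝒴 j → Fin (D j),
      J γ' = ∫ θ, ∫ l, ∫ y,
        C (γ₀ fun j => γ' j (y j)) (fun j => γ' j (y j)) θ
          * (pΘ θ * pΛ θ l * ∏ j, p j l (y j)) ∂(Measure.pi ν) ∂νΛ ∂νΘ)
    -- a(θ, λ, d): conditional expectation of the cost given (θ, λ), with d at slot i
    (a : Θ → Λ → Fin (D i) → ℝ)
    (ha : ∀ θ l d, a θ l d = ∫ y,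
      C (γ₀ (Function.update (fun j => γ j (y j)) i d))
          (Function.update (fun j => γ j (y j)) i d) θ
        * ∏ j, p j l (y j) ∂(Measure.pi ν))
    -- γ_i minimizes the Bayes risk over all measurable quantizers at sensor i
    (hmin : ∀ δ : 𝒴 i → Fin (D i), Measurable δ → J γ ≤ J (Function.update γ i δ)) :
    -- necessary condition: a.e. pointwise minimization w.r.t. the marginal of Y_i
    ∀ᵐ yᵢ ∂((ν i).withDensity fun y =>
        ENNReal.ofReal (∫ θ, ∫ l, pΘ θ * pΛ θ l * p i l y ∂νΛ ∂νΘ)),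
      ∀ d : Fin (D i),
        (∫ θ, ∫ l, a θ l (γ i yᵢ) * (pΘ θ * pΛ θ l * p i l yᵢ) ∂νΛ ∂νΘ)
          ≤ ∫ θ, ∫ l, a θ l d * (pΘ θ * pΛ θ l * p i l yᵢ) ∂νΛ ∂νΘ :=
  necessary_condition_optimal_quantizer_dependent_general 𝒴 νΘ νΛ ν pΘ hpΘ_meas pΛ hpΛ_meas p
    hp_meas hp_prob D γ₀ C hC_meas γ hγ_meas i hInt J hJ a ha hmin
end
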